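/- arXiv:math/9712211 — 4 statements merged into one kernel-verified Lean document; each statement's English description precedes it below -/
import Mathlib

section
/- In the symmetric group Σ_n, let δ̄ denote the n-cycle (n, n−1, …, 2, 1). If π_1, …, π_k are pairwise parallel descending cycles on {1,…,n}, then the permutation π_1 π_2 ⋯ π_k is ≤ δ̄ in the absolute order; concretely, there exist products of parallel descending cycles μ and ν with μ · (π_1⋯π_k) · ν = δ̄ and the sum of the reflection lengths of μ, π_1⋯π_k, ν equals n−1. -/
/-- Two subsets `S, T` of `Fin n` are non-interlacing (and disjoint). -/
def NonInterlacingS {n : ℕ} (S T : Set (Fin n)) : Prop :=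
  ∀ a ∈ S, ∀ b ∈ S, ∀ c ∈ T, ∀ d ∈ T, a < b → c < d →
    ((a : ℤ) - (c : ℤ)) * ((a : ℤ) - (d : ℤ)) * ((b : ℤ) - (c : ℤ)) * ((b : ℤ) - (d : ℤ)) > 0

/-- `π` maps each orbit descendingly (to the next smaller element, min to max). -/
def DescSteps {n : ℕ} (π : Equiv.Perm (Fin n)) : Prop :=
  ∀ x : Fin n,
    π x = x ∨
    (π x < x ∧ ∀ y : Fin n, π.SameCycle x y → ¬(π x < y ∧ y < x)) ∨
    ((∀ y : Fin n, π.SameCycle x y → x ≤ y) ∧ (∀ y : Fin n, π.SameCycle x y → y ≤ π x))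

/-- A descending cycle `(t_j, …, t_1)`, `t_j > ⋯ > t_1`, `j ≥ 2`. -/
def IsDescendingCycle {n : ℕ} (c : Equiv.Perm (Fin n)) : Prop :=
  c.IsCycle ∧ DescSteps c

/-- A product of pairwise parallel descending cycles. -/
def IsPDCProd {n : ℕ} (π : Equiv.Perm (Fin n)) : Prop :=
  ∃ L : List (Equiv.Perm (Fin n)),
    (∀ c ∈ L, IsDescendingCycle c) ∧
    L.Pairwise (fun c d => NonInterlacingS {x | c x ≠ x} {x | d x ≠ x}) ∧
    L.prod = π

/-- The reflection length of a permutation: `n` minus its number of orbits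
(including fixed points), i.e. the size of the support minus the number of
nontrivial cycles. -/
def refLen {n : ℕ} (π : Equiv.Perm (Fin n)) : ℕ :=
  π.support.card - π.cycleType.card


open Finset Equiv Equiv.Perm in
theorem _auxopen : True := trivial

section Aux
open Finset Equiv Equiv.Perm

theorem finRotate_inv_apply {m : ℕ} [NeZero m] (i : Fin m) :
    (finRotate m)⁻¹ i = i - 1 := by
  rcases m with _ | m
  · exact absurd rfl (NeZero.ne 0)
  · rw [Equiv.Perm.inv_eq_iff_eq, finRotate_succ_apply, sub_add_cancel]

variable {n : ℕ}

def descFun (A : Finset (Fin n)) (x : Fin n) : Fin n :=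
  if hx : x ∈ A then
    if h : (A.filter (· < x)).Nonempty then (A.filter (· < x)).max' h
    else A.max' ⟨x, hx⟩
  else x

def dc (A : Finset (Fin n)) : Equiv.Perm (Fin n) :=
  ((finRotate A.card)⁻¹).extendDomain (A.orderIsoOfFin rfl).toEquiv

theorem fin_coe_sub_one {m : ℕ} [NeZero m] (a : Fin m) :
    ((a - 1 : Fin m) : ℕ) = if a = 0 then m - 1 else (a : ℕ) - 1 := by
  rcases m with _ | m
  · exact absurd rfl (NeZero.ne 0)
  · exact Fin.coe_sub_one a

theorem dc_apply (A : Finset (Fin n)) (x : Fin n) : dc A x = descFun A x := by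
  by_cases hx : x ∈ A
  · have hcard : A.card ≠ 0 := Finset.card_ne_zero.2 ⟨x, hx⟩
    haveI : NeZero A.card := ⟨hcard⟩
    set e := A.orderIsoOfFin rfl with he
    set i := e.symm ⟨x, hx⟩ with hi
    have hxe : (↑(e i) : Fin n) = x := by simp [hi]
    have key : dc A x = ↑(e (i - 1)) := by
      conv_lhs => rw [← hxe]
      rw [show ((dc A) ↑(e i) : Fin n) = ↑(e ((finRotate A.card)⁻¹ i)) from
        Equiv.Perm.extendDomain_apply_image _ _ _, finRotate_inv_apply]
    by_cases hi0 : i = 0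
    · -- x is the minimum of A; filter is empty, dc x = max A
      have hfe : ¬(A.filter (· < x)).Nonempty := by
        rintro ⟨y, hy⟩
        rw [Finset.mem_filter] at hy
        obtain ⟨hyA, hylt⟩ := hy
        have hj : e.symm ⟨y, hyA⟩ < i := e.symm.lt_iff_lt.mpr (Subtype.mk_lt_mk.mpr hylt)
        rw [hi0] at hj
        exact absurd hj (by simp)
      rw [descFun, dif_pos hx, dif_neg hfe, key]
      have hmem : (↑(e (i - 1)) : Fin n) ∈ A := (e (i - 1)).2
      refine le_antisymm (Finset.le_max' _ _ hmem) (Finset.max'_le _ _ _ ?_)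
      intro y hy
      have hle : e.symm ⟨y, hy⟩ ≤ i - 1 := by
        rw [Fin.le_def, fin_coe_sub_one, hi0, if_pos rfl]
        have := (e.symm ⟨y, hy⟩).isLt
        omega
      calc y = ↑(e (e.symm ⟨y, hy⟩)) := by simp
        _ ≤ ↑(e (i - 1)) := Subtype.coe_le_coe.mpr (e.le_iff_le.mpr hle)
    · -- general case: dc x = max of elements below x
      have hlt : i - 1 < i := by
        rw [Fin.lt_def, fin_coe_sub_one, if_neg hi0]
        exact Nat.sub_lt (Nat.pos_of_ne_zero (fun h => hi0 (Fin.ext h))) one_pos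
      have hzlt : (↑(e (i - 1)) : Fin n) < x := by
        rw [← hxe]
        exact Subtype.coe_lt_coe.mpr (e.lt_iff_lt.mpr hlt)
      have hzmem : (↑(e (i - 1)) : Fin n) ∈ A.filter (· < x) :=
        Finset.mem_filter.mpr ⟨(e (i-1)).2, hzlt⟩
      rw [descFun, dif_pos hx, dif_pos ⟨_, hzmem⟩, key]
      refine le_antisymm (Finset.le_max' _ _ hzmem) (Finset.max'_le _ _ _ ?_)
      intro y hy
      rw [Finset.mem_filter] at hy
      obtain ⟨hyA, hylt⟩ := hy
      have hj : e.symm ⟨y, hyA⟩ < i := e.symm.lt_iff_lt.mpr (Subtype.mk_lt_mk.mpr hylt)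
      have hj' : e.symm ⟨y, hyA⟩ ≤ i - 1 := by
        rw [Fin.le_def, fin_coe_sub_one, if_neg hi0]
        exact Nat.le_sub_one_of_lt hj
      calc y = ↑(e (e.symm ⟨y, hyA⟩)) := by simp
        _ ≤ ↑(e (i - 1)) := Subtype.coe_le_coe.mpr (e.le_iff_le.mpr hj')
  · rw [descFun, dif_neg hx]
    exact Equiv.Perm.extendDomain_apply_not_subtype _ _ hx

theorem dc_apply_not_mem {A : Finset (Fin n)} {x : Fin n} (h : x ∉ A) : dc A x = x := by
  rw [dc_apply, descFun, dif_neg h]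

theorem dc_apply_of_lt {A : Finset (Fin n)} {x : Fin n} (hx : x ∈ A)
    (h : (A.filter (· < x)).Nonempty) : dc A x = (A.filter (· < x)).max' h := by
  rw [dc_apply, descFun, dif_pos hx, dif_pos h]

theorem dc_apply_min {A : Finset (Fin n)} {x : Fin n} (hx : x ∈ A)
    (h : ¬(A.filter (· < x)).Nonempty) : dc A x = A.max' ⟨x, hx⟩ := by
  rw [dc_apply, descFun, dif_pos hx, dif_neg h]

theorem dc_mem {A : Finset (Fin n)} {x : Fin n} (hx : x ∈ A) : dc A x ∈ A := by
  by_cases h : (A.filter (· < x)).Nonempty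
  · rw [dc_apply_of_lt hx h]
    exact Finset.mem_of_mem_filter _ (Finset.max'_mem _ h)
  · rw [dc_apply_min hx h]
    exact Finset.max'_mem _ _

theorem dc_lt_of_lt {A : Finset (Fin n)} {x : Fin n} (hx : x ∈ A)
    (h : (A.filter (· < x)).Nonempty) : dc A x < x := by
  rw [dc_apply_of_lt hx h]
  have := Finset.max'_mem _ h
  exact (Finset.mem_filter.mp this).2

theorem dc_support_subset (A : Finset (Fin n)) : (dc A).support ⊆ A := by
  intro x hx
  rw [Equiv.Perm.mem_support] at hx
  by_contra h
  exact hx (dc_apply_not_mem h)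

theorem dc_apply_ne {A : Finset (Fin n)} {x : Fin n} (hx : x ∈ A) (h2 : 2 ≤ A.card) :
    dc A x ≠ x := by
  by_cases h : (A.filter (· < x)).Nonempty
  · exact ne_of_lt (dc_lt_of_lt hx h)
  · rw [dc_apply_min hx h]
    obtain ⟨y, hy, hyx⟩ := Finset.exists_mem_ne h2 x
    have hxy : x < y := by
      rcases lt_or_gt_of_ne (Ne.symm hyx) with h1 | h1
      · exact h1
      · exact absurd ⟨y, Finset.mem_filter.mpr ⟨hy, h1⟩⟩ h
    exact ne_of_gt (lt_of_lt_of_le hxy (Finset.le_max' _ _ hy))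

theorem dc_support {A : Finset (Fin n)} (h2 : 2 ≤ A.card) : (dc A).support = A := by
  apply le_antisymm (dc_support_subset A)
  intro x hx
  rw [Equiv.Perm.mem_support]
  exact dc_apply_ne hx h2

theorem dc_eq_one {A : Finset (Fin n)} (h : A.card ≤ 1) : dc A = 1 := by
  apply Equiv.ext
  intro x
  simp only [Equiv.Perm.coe_one, id_eq]
  by_cases hx : x ∈ A
  · have h1 : ¬(A.filter (· < x)).Nonempty := by
      rintro ⟨y, hy⟩
      rw [Finset.mem_filter] at hy
      have : y ≠ x := ne_of_lt hy.2
      have : 2 ≤ A.card := Finset.one_lt_card.mpr ⟨y, hy.1, x, hx, this⟩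
      omega
    rw [dc_apply_min hx h1]
    have : A = {x} := by
      apply Finset.eq_singleton_iff_unique_mem.mpr
      refine ⟨hx, fun y hy => ?_⟩
      by_contra hne
      have : 2 ≤ A.card := Finset.one_lt_card.mpr ⟨y, hy, x, hx, hne⟩
      omega
    simp [this]
  · exact dc_apply_not_mem hx

theorem dc_isCycle {A : Finset (Fin n)} (h2 : 2 ≤ A.card) : (dc A).IsCycle := by
  obtain ⟨k, hk⟩ : ∃ k, A.card = k + 2 := ⟨A.card - 2, by omega⟩
  have h1 : (finRotate A.card).IsCycle := by rw [hk]; exact isCycle_finRotate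
  exact (h1.inv).extendDomain _

theorem dc_descSteps (A : Finset (Fin n)) : DescSteps (dc A) := by
  intro x
  by_cases hx : x ∈ A
  · by_cases h : (A.filter (· < x)).Nonempty
    · refine Or.inr (Or.inl ⟨dc_lt_of_lt hx h, fun y hsc ⟨h1, h2⟩ => ?_⟩)
      have hxsupp : x ∈ (dc A).support :=
        Equiv.Perm.mem_support.mpr (ne_of_lt (dc_lt_of_lt hx h))
      have hysupp : y ∈ (dc A).support := (hsc.mem_support_iff).mp hxsupp
      have hyA : y ∈ A := dc_support_subset A hysupp
      have hyf : y ∈ A.filter (· < x) := Finset.mem_filter.mpr ⟨hyA, h2⟩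
      have : y ≤ dc A x := by
        rw [dc_apply_of_lt hx h]
        exact Finset.le_max' _ _ hyf
      exact absurd h1 (not_lt.mpr this)
    · refine Or.inr (Or.inr ⟨fun y hsc => ?_, fun y hsc => ?_⟩)
      · by_cases hfix : dc A x = x
        · obtain ⟨k, hk⟩ := hsc
          rw [(dc A).zpow_apply_eq_self_of_apply_eq_self hfix k] at hk
          exact le_of_eq hk
        · have hysupp : y ∈ (dc A).support :=
            (hsc.mem_support_iff).mp (Equiv.Perm.mem_support.mpr hfix)
          have hyA : y ∈ A := dc_support_subset A hysupp
          by_contra hlt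
          exact h ⟨y, Finset.mem_filter.mpr ⟨hyA, lt_of_not_ge hlt⟩⟩
      · by_cases hfix : dc A x = x
        · obtain ⟨k, hk⟩ := hsc
          rw [(dc A).zpow_apply_eq_self_of_apply_eq_self hfix k] at hk
          rw [← hk, hfix]
        · have hysupp : y ∈ (dc A).support :=
            (hsc.mem_support_iff).mp (Equiv.Perm.mem_support.mpr hfix)
          have hyA : y ∈ A := dc_support_subset A hysupp
          rw [dc_apply_min hx h]
          exact Finset.le_max' _ _ hyA
  · left; exact dc_apply_not_mem hx

theorem dc_isDescendingCycle {A : Finset (Fin n)} (h2 : 2 ≤ A.card) :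
    IsDescendingCycle (dc A) :=
  ⟨dc_isCycle h2, dc_descSteps A⟩

theorem IsDescendingCycle.eq_dc {c : Equiv.Perm (Fin n)} (hc : IsDescendingCycle c) :
    c = dc c.support := by
  apply Equiv.ext
  intro x
  rw [dc_apply, descFun]
  by_cases hx : x ∈ c.support
  · rw [dif_pos hx]
    have hcx : c x ≠ x := Equiv.Perm.mem_support.mp hx
    have hcxsupp : c x ∈ c.support := by
      rw [Equiv.Perm.mem_support]
      intro h
      exact hcx (c.injective h)
    rcases hc.2 x with h1 | ⟨hlt, hbet⟩ | ⟨hmin, hmax⟩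
    · exact absurd h1 hcx
    · have hcxf : c x ∈ c.support.filter (· < x) := Finset.mem_filter.mpr ⟨hcxsupp, hlt⟩
      rw [dif_pos ⟨_, hcxf⟩]
      refine le_antisymm (Finset.le_max' _ _ hcxf) (Finset.max'_le _ _ _ ?_)
      intro y hy
      rw [Finset.mem_filter] at hy
      have hsc : c.SameCycle x y := hc.1.sameCycle hcx (Equiv.Perm.mem_support.mp hy.1)
      by_contra hgt
      exact hbet y hsc ⟨lt_of_not_ge hgt, hy.2⟩
    · have hfe : ¬(c.support.filter (· < x)).Nonempty := by
        rintro ⟨y, hy⟩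
        rw [Finset.mem_filter] at hy
        have hsc : c.SameCycle x y := hc.1.sameCycle hcx (Equiv.Perm.mem_support.mp hy.1)
        exact absurd hy.2 (not_lt.mpr (hmin y hsc))
      rw [dif_neg hfe]
      refine le_antisymm (Finset.le_max' _ _ hcxsupp) (Finset.max'_le _ _ _ ?_)
      intro y hy
      exact hmax y (hc.1.sameCycle hcx (Equiv.Perm.mem_support.mp hy))
  · rw [dif_neg hx]
    exact Equiv.Perm.notMem_support.mp hx

theorem refLen_dc {A : Finset (Fin n)} (h2 : 2 ≤ A.card) : refLen (dc A) = A.card - 1 := by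
  rw [refLen, dc_support h2, (dc_isCycle h2).cycleType]
  simp

theorem refLen_one : refLen (1 : Equiv.Perm (Fin n)) = 0 := by
  simp [refLen]

theorem card_cycleType_le {σ : Equiv.Perm (Fin n)} :
    σ.cycleType.card ≤ σ.support.card := by
  rw [← Equiv.Perm.sum_cycleType]
  have h : ∀ x ∈ σ.cycleType, 1 ≤ x := fun x hx =>
    le_trans (by norm_num) (Equiv.Perm.two_le_of_mem_cycleType hx)
  simpa using Multiset.card_nsmul_le_sum h

theorem refLen_mul_disjoint {σ τ : Equiv.Perm (Fin n)} (h : σ.Disjoint τ) :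
    refLen (σ * τ) = refLen σ + refLen τ := by
  have h1 := h.card_support_mul
  have h2 := h.cycleType_mul
  have c1 : σ.cycleType.card ≤ σ.support.card := card_cycleType_le
  have c2 : τ.cycleType.card ≤ τ.support.card := card_cycleType_le
  rw [refLen, refLen, refLen, h1, h2, Multiset.card_add]
  omega

/-! ### Anchors and arcs -/

def anchor (T : Finset (Fin n)) (y : Fin n) : Fin n :=
  if h : (T.filter (· ≤ y)).Nonempty then (T.filter (· ≤ y)).max' h
  else if h2 : T.Nonempty then T.max' h2 else y

def arc (A T : Finset (Fin n)) (t : Fin n) : Finset (Fin n) :=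
  A.filter (fun y => anchor T y = t)

theorem anchor_mem {T : Finset (Fin n)} (hT : T.Nonempty) (y : Fin n) :
    anchor T y ∈ T := by
  rw [anchor]
  by_cases h : (T.filter (· ≤ y)).Nonempty
  · rw [dif_pos h]
    exact Finset.mem_of_mem_filter _ (Finset.max'_mem _ h)
  · rw [dif_neg h, dif_pos hT]
    exact Finset.max'_mem _ _

theorem anchor_ge {T : Finset (Fin n)} {y t' : Fin n} (ht' : t' ∈ T) (h : t' ≤ y) :
    t' ≤ anchor T y := by
  have hm : t' ∈ T.filter (· ≤ y) := Finset.mem_filter.mpr ⟨ht', h⟩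
  have hne : (T.filter (· ≤ y)).Nonempty := ⟨t', hm⟩
  rw [anchor, dif_pos hne]
  exact Finset.le_max' (T.filter (· ≤ y)) t' hm

theorem anchor_le {T : Finset (Fin n)} {y : Fin n}
    (hne : (T.filter (· ≤ y)).Nonempty) : anchor T y ≤ y := by
  rw [anchor, dif_pos hne]
  exact (Finset.mem_filter.mp (Finset.max'_mem _ hne)).2

theorem anchor_le' {T : Finset (Fin n)} {y t' : Fin n} (ht' : t' ∈ T) (h : t' ≤ y) :
    anchor T y ≤ y := by
  have hm : t' ∈ T.filter (· ≤ y) := Finset.mem_filter.mpr ⟨ht', h⟩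
  exact anchor_le ⟨t', hm⟩

theorem anchor_max {T : Finset (Fin n)} (hT : T.Nonempty) {y : Fin n}
    (h : ∀ t ∈ T, y < t) : anchor T y = T.max' hT := by
  have hne : ¬(T.filter (· ≤ y)).Nonempty := by
    rintro ⟨t, ht⟩
    rw [Finset.mem_filter] at ht
    exact absurd ht.2 (not_le.mpr (h t ht.1))
  rw [anchor, dif_neg hne, dif_pos hT]

theorem anchor_self {T : Finset (Fin n)} {t : Fin n} (ht : t ∈ T) : anchor T t = t :=
  le_antisymm (anchor_le' ht le_rfl) (anchor_ge ht le_rfl)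

theorem anchor_eq_of_between {T : Finset (Fin n)} {w t₀ : Fin n}
    (ht₀ : t₀ ∈ T) (h1 : t₀ ≤ w)
    (hmax : ∀ t' ∈ T, t' ≤ w → t' ≤ t₀) : anchor T w = t₀ := by
  refine le_antisymm ?_ (anchor_ge ht₀ h1)
  have hm : t₀ ∈ T.filter (· ≤ w) := Finset.mem_filter.mpr ⟨ht₀, h1⟩
  have hne : (T.filter (· ≤ w)).Nonempty := ⟨t₀, hm⟩
  rw [anchor, dif_pos hne]
  apply Finset.max'_le
  intro t' ht'
  rw [Finset.mem_filter] at ht'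
  exact hmax t' ht'.1 ht'.2

theorem mem_arc {A T : Finset (Fin n)} {t y : Fin n} :
    y ∈ arc A T t ↔ y ∈ A ∧ anchor T y = t := Finset.mem_filter

theorem mem_arc_self {A T : Finset (Fin n)} {y : Fin n} (hy : y ∈ A) :
    y ∈ arc A T (anchor T y) := mem_arc.mpr ⟨hy, rfl⟩

theorem arc_subset (A T : Finset (Fin n)) (t : Fin n) : arc A T t ⊆ A :=
  Finset.filter_subset _ _

theorem arc_disjoint {A T : Finset (Fin n)} {t t' : Fin n} (h : t ≠ t') :
    _root_.Disjoint (arc A T t) (arc A T t') := by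
  rw [Finset.disjoint_left]
  intro y hy hy'
  exact h ((mem_arc.mp hy).2 ▸ (mem_arc.mp hy').2 ▸ rfl)

theorem mem_arc_cases {A T : Finset (Fin n)} (hT : T.Nonempty) {t y : Fin n}
    (hy : y ∈ arc A T t) : t ≤ y ∨ ((∀ t' ∈ T, y < t') ∧ t = T.max' hT) := by
  obtain ⟨hyA, hanch⟩ := mem_arc.mp hy
  by_cases h : ∃ t' ∈ T, t' ≤ y
  · obtain ⟨t', ht', h'⟩ := h
    left
    rw [← hanch]
    exact anchor_le' ht' h'
  · right
    push_neg at h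
    refine ⟨h, ?_⟩
    rw [← hanch, anchor_max hT h]

theorem mem_arc_lt {A T : Finset (Fin n)} {t s y : Fin n} (hs : s ∈ T) (hts : t < s)
    (hy : y ∈ arc A T t) : y < s := by
  obtain ⟨hyA, hanch⟩ := mem_arc.mp hy
  by_contra h
  have := anchor_ge hs (le_of_not_gt h)
  rw [hanch] at this
  exact absurd hts (not_lt.mpr this)

theorem card_eq_sum_arc {A T : Finset (Fin n)} (hT : T.Nonempty) :
    A.card = ∑ t ∈ T, (arc A T t).card :=
  Finset.card_eq_sum_card_fiberwise (fun y _ => anchor_mem hT y)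

/-! ### Products of permutations with disjoint territories -/

theorem prod_apply_fix (l : List (Equiv.Perm (Fin n))) (x : Fin n)
    (h : ∀ p ∈ l, p x = x) : l.prod x = x := by
  induction l with
  | nil => rfl
  | cons p l ih =>
    rw [List.prod_cons, Equiv.Perm.mul_apply, ih (fun q hq => h q (List.mem_cons_of_mem _ hq)),
      h p (List.mem_cons_self)]

theorem prod_map_dc_apply (l : List (Finset (Fin n)))
    (hdisj : l.Pairwise (fun B C => _root_.Disjoint B C)) {B : Finset (Fin n)} (hB : B ∈ l)
    {x : Fin n} (hx : x ∈ B) : (l.map dc).prod x = dc B x := by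
  induction l with
  | nil => exact absurd hB (List.not_mem_nil)
  | cons C l ih =>
    rw [List.map_cons, List.prod_cons, Equiv.Perm.mul_apply]
    rcases List.mem_cons.mp hB with hBC | hBl
    · subst hBC
      have hfix : (l.map dc).prod x = x := by
        apply prod_apply_fix
        intro p hp
        rw [List.mem_map] at hp
        obtain ⟨C', hC', rfl⟩ := hp
        apply dc_apply_not_mem
        have hd := (List.pairwise_cons.mp hdisj).1 C' hC'
        exact Finset.disjoint_left.mp hd hx
      rw [hfix]
    · have hd := (List.pairwise_cons.mp hdisj).1 B hBl
      rw [ih (List.pairwise_cons.mp hdisj).2 hBl]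
      apply dc_apply_not_mem
      exact Finset.disjoint_left.mp hd.symm (dc_mem hx)

/-! ### The arc decomposition of `dc A` -/

theorem arcs_pairwise_disjoint (A T : Finset (Fin n)) :
    ((T.sort (· ≤ ·)).map (arc A T)).Pairwise (fun B C => _root_.Disjoint B C) := by
  apply List.Pairwise.map
  · exact fun t t' (h : t ≠ t') => arc_disjoint h
  · exact List.Pairwise.imp (fun h => h) (Finset.sort_nodup T (· ≤ ·))

theorem dc_arcs {A T : Finset (Fin n)} (hTA : T ⊆ A) (hT2 : 2 ≤ T.card) :
    (((T.sort (· ≤ ·)).map (fun t => dc (arc A T t))).prod) * dc T = dc A := by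
  have hT : T.Nonempty := Finset.card_pos.mp (by omega)
  have hmap : (T.sort (· ≤ ·)).map (fun t => dc (arc A T t))
      = ((T.sort (· ≤ ·)).map (arc A T)).map dc := by rw [List.map_map]; rfl
  apply Equiv.ext
  intro x
  rw [Equiv.Perm.mul_apply, hmap]
  by_cases hxA : x ∈ A
  case neg =>
    have hxT : x ∉ T := fun h => hxA (hTA h)
    rw [dc_apply_not_mem hxT, dc_apply_not_mem hxA]
    apply prod_apply_fix
    intro p hp
    rw [List.mem_map] at hp
    obtain ⟨B, hB, rfl⟩ := hp
    rw [List.mem_map] at hB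
    obtain ⟨t, _, rfl⟩ := hB
    exact dc_apply_not_mem (fun h => hxA (arc_subset A T t h))
  case pos =>
  have harc : ∀ t ∈ T, ∀ y ∈ arc A T t, (((T.sort (· ≤ ·)).map (arc A T)).map dc).prod y
      = dc (arc A T t) y := by
    intro t ht y hy
    exact prod_map_dc_apply _ (arcs_pairwise_disjoint A T)
      (List.mem_map.mpr ⟨t, (Finset.mem_sort _).mpr ht, rfl⟩) hy
  by_cases hxT : x ∈ T
  case neg =>
    -- x ∈ A \ T
    rw [dc_apply_not_mem hxT]
    have ht₀T : anchor T x ∈ T := anchor_mem hT x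
    set t₀ := anchor T x with ht₀def
    have hxarc : x ∈ arc A T t₀ := mem_arc_self hxA
    rw [harc t₀ ht₀T x hxarc]
    by_cases hbelow : ∃ t' ∈ T, t' ≤ x
    · -- (i-a)
      obtain ⟨t', ht', ht'x⟩ := hbelow
      have ht₀x : t₀ ≤ x := anchor_le' ht' ht'x
      have ht₀lt : t₀ < x := lt_of_le_of_ne ht₀x (fun h => hxT (h ▸ ht₀T))
      have ht₀A : t₀ ∈ A := hTA ht₀T
      have ht₀f : t₀ ∈ A.filter (· < x) := Finset.mem_filter.mpr ⟨ht₀A, ht₀lt⟩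
      have hAf : (A.filter (· < x)).Nonempty := ⟨t₀, ht₀f⟩
      have hwA : (A.filter (· < x)).max' hAf ∈ A :=
        (Finset.mem_filter.mp (Finset.max'_mem _ hAf)).1
      have hwlt : (A.filter (· < x)).max' hAf < x :=
        (Finset.mem_filter.mp (Finset.max'_mem _ hAf)).2
      have ht₀w : t₀ ≤ (A.filter (· < x)).max' hAf :=
        Finset.le_max' (A.filter (· < x)) t₀ ht₀f
      have hwanch : anchor T ((A.filter (· < x)).max' hAf) = t₀ := by
        apply anchor_eq_of_between ht₀T ht₀w
        intro s hs hsw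
        rw [ht₀def]
        exact anchor_ge hs (le_trans hsw (le_of_lt hwlt))
      have hwarc : (A.filter (· < x)).max' hAf ∈ arc A T t₀ := mem_arc.mpr ⟨hwA, hwanch⟩
      have hwf2 : (A.filter (· < x)).max' hAf ∈ (arc A T t₀).filter (· < x) :=
        Finset.mem_filter.mpr ⟨hwarc, hwlt⟩
      have hwf : ((arc A T t₀).filter (· < x)).Nonempty := ⟨_, hwf2⟩
      rw [dc_apply_of_lt hxarc hwf, dc_apply_of_lt hxA hAf]
      refine le_antisymm (Finset.max'_le _ _ _ ?_)
        (Finset.le_max' ((arc A T t₀).filter (· < x)) _ hwf2)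
      intro y hy
      rw [Finset.mem_filter] at hy
      have hyf : y ∈ A.filter (· < x) := Finset.mem_filter.mpr ⟨arc_subset A T t₀ hy.1, hy.2⟩
      exact Finset.le_max' (A.filter (· < x)) y hyf
    · -- (i-b)
      push_neg at hbelow
      have ht₀max : t₀ = T.max' hT := by rw [ht₀def, anchor_max hT hbelow]
      by_cases hAf : (A.filter (· < x)).Nonempty
      · -- (i-b-1)
        have hwA : (A.filter (· < x)).max' hAf ∈ A :=
          (Finset.mem_filter.mp (Finset.max'_mem _ hAf)).1
        have hwlt : (A.filter (· < x)).max' hAf < x :=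
          (Finset.mem_filter.mp (Finset.max'_mem _ hAf)).2
        have hwanch : anchor T ((A.filter (· < x)).max' hAf) = t₀ := by
          rw [anchor_max hT (fun t ht => lt_trans hwlt (hbelow t ht)), ht₀max]
        have hwarc : (A.filter (· < x)).max' hAf ∈ arc A T t₀ := mem_arc.mpr ⟨hwA, hwanch⟩
        have hwf2 : (A.filter (· < x)).max' hAf ∈ (arc A T t₀).filter (· < x) :=
          Finset.mem_filter.mpr ⟨hwarc, hwlt⟩
        have hwf : ((arc A T t₀).filter (· < x)).Nonempty := ⟨_, hwf2⟩
        rw [dc_apply_of_lt hxarc hwf, dc_apply_of_lt hxA hAf]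
        refine le_antisymm (Finset.max'_le _ _ _ ?_)
          (Finset.le_max' ((arc A T t₀).filter (· < x)) _ hwf2)
        intro y hy
        rw [Finset.mem_filter] at hy
        have hyf : y ∈ A.filter (· < x) := Finset.mem_filter.mpr ⟨arc_subset A T t₀ hy.1, hy.2⟩
        exact Finset.le_max' (A.filter (· < x)) y hyf
      · -- (i-b-2)
        have hf2 : ¬((arc A T t₀).filter (· < x)).Nonempty := by
          rintro ⟨y, hy⟩
          rw [Finset.mem_filter] at hy
          have hyf : y ∈ A.filter (· < x) :=
            Finset.mem_filter.mpr ⟨arc_subset A T t₀ hy.1, hy.2⟩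
          exact hAf ⟨y, hyf⟩
        rw [dc_apply_min hxarc hf2, dc_apply_min hxA hAf]
        have hAmax : A.max' ⟨x, hxA⟩ ∈ arc A T t₀ := by
          refine mem_arc.mpr ⟨Finset.max'_mem _ _, ?_⟩
          rw [ht₀max]
          apply anchor_eq_of_between (Finset.max'_mem T hT)
            (Finset.le_max' A _ (hTA (Finset.max'_mem T hT)))
          intro s hs _
          exact Finset.le_max' T s hs
        refine le_antisymm (Finset.max'_le _ _ _ ?_) (Finset.le_max' (arc A T t₀) _ hAmax)
        intro y hy
        exact Finset.le_max' A y (arc_subset A T t₀ hy)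
  case pos =>
    -- x ∈ T
    by_cases hTf : (T.filter (· < x)).Nonempty
    · -- (ii-a)
      have huT : (T.filter (· < x)).max' hTf ∈ T :=
        (Finset.mem_filter.mp (Finset.max'_mem _ hTf)).1
      have hux : (T.filter (· < x)).max' hTf < x :=
        (Finset.mem_filter.mp (Finset.max'_mem _ hTf)).2
      set u := (T.filter (· < x)).max' hTf with hudef
      rw [dc_apply_of_lt hxT hTf]
      have huarc : u ∈ arc A T u := mem_arc.mpr ⟨hTA huT, anchor_self huT⟩
      rw [harc u huT u huarc]
      have harcmin : ¬((arc A T u).filter (· < u)).Nonempty := by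
        rintro ⟨y, hy⟩
        rw [Finset.mem_filter] at hy
        rcases mem_arc_cases hT hy.1 with h | ⟨hlt, hmax⟩
        · exact absurd hy.2 (not_lt.mpr h)
        · have hxu : x ≤ u := hmax ▸ Finset.le_max' T x hxT
          exact absurd hux (not_lt.mpr hxu)
      rw [dc_apply_min huarc harcmin]
      have huf : u ∈ A.filter (· < x) := Finset.mem_filter.mpr ⟨hTA huT, hux⟩
      have hAf : (A.filter (· < x)).Nonempty := ⟨u, huf⟩
      rw [dc_apply_of_lt hxA hAf]
      have hwA : (A.filter (· < x)).max' hAf ∈ A :=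
        (Finset.mem_filter.mp (Finset.max'_mem _ hAf)).1
      have hwlt : (A.filter (· < x)).max' hAf < x :=
        (Finset.mem_filter.mp (Finset.max'_mem _ hAf)).2
      have huw : u ≤ (A.filter (· < x)).max' hAf := Finset.le_max' (A.filter (· < x)) u huf
      have hwanch : anchor T ((A.filter (· < x)).max' hAf) = u := by
        apply anchor_eq_of_between huT huw
        intro s hs hsw
        have hsx : s < x := lt_of_le_of_lt hsw hwlt
        have hsf : s ∈ T.filter (· < x) := Finset.mem_filter.mpr ⟨hs, hsx⟩
        exact Finset.le_max' (T.filter (· < x)) s hsf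
      have hwarc : (A.filter (· < x)).max' hAf ∈ arc A T u := mem_arc.mpr ⟨hwA, hwanch⟩
      refine le_antisymm (Finset.max'_le _ _ _ ?_) (Finset.le_max' (arc A T u) _ hwarc)
      intro y hy
      have hyx : y < x := mem_arc_lt hxT hux hy
      have hyf : y ∈ A.filter (· < x) := Finset.mem_filter.mpr ⟨arc_subset A T u hy, hyx⟩
      exact Finset.le_max' (A.filter (· < x)) y hyf
    · -- (ii-b)
      rw [dc_apply_min hxT hTf]
      have htMT : T.max' ⟨x, hxT⟩ ∈ T := Finset.max'_mem _ _
      set tM := T.max' ⟨x, hxT⟩ with htMdef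
      have htMarc : tM ∈ arc A T tM := mem_arc.mpr ⟨hTA htMT, anchor_self htMT⟩
      rw [harc tM htMT tM htMarc]
      have hxle : ∀ t ∈ T, x ≤ t := by
        intro t ht
        by_contra h
        have : t ∈ T.filter (· < x) := Finset.mem_filter.mpr ⟨ht, lt_of_not_ge h⟩
        exact hTf ⟨t, this⟩
      have harcbelow : ∀ y, y ∈ (arc A T tM).filter (· < tM) ↔ y ∈ A.filter (· < x) := by
        intro y
        rw [Finset.mem_filter, Finset.mem_filter]
        constructor
        · rintro ⟨hyarc, hylt⟩
          rcases mem_arc_cases hT hyarc with h | ⟨hlt, _⟩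
          · exact absurd hylt (not_lt.mpr h)
          · exact ⟨arc_subset A T tM hyarc, hlt x hxT⟩
        · rintro ⟨hyA, hylt⟩
          have hyallT : ∀ t ∈ T, y < t := fun t ht => lt_of_lt_of_le hylt (hxle t ht)
          have hanch : anchor T y = tM := by rw [anchor_max hT hyallT, htMdef]
          exact ⟨mem_arc.mpr ⟨hyA, hanch⟩, hyallT tM htMT⟩
      by_cases hAf : (A.filter (· < x)).Nonempty
      · -- (ii-b-1)
        have hf2 : ((arc A T tM).filter (· < tM)).Nonempty := by
          obtain ⟨y, hy⟩ := hAf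
          exact ⟨y, (harcbelow y).mpr hy⟩
        rw [dc_apply_of_lt htMarc hf2, dc_apply_of_lt hxA hAf]
        congr 1
        apply Finset.ext
        exact harcbelow
      · -- (ii-b-2)
        have hf2 : ¬((arc A T tM).filter (· < tM)).Nonempty := by
          rintro ⟨y, hy⟩
          exact hAf ⟨y, (harcbelow y).mp hy⟩
        rw [dc_apply_min htMarc hf2, dc_apply_min hxA hAf]
        have hAmax : A.max' ⟨x, hxA⟩ ∈ arc A T tM := by
          refine mem_arc.mpr ⟨Finset.max'_mem _ _, ?_⟩
          rw [htMdef]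
          apply anchor_eq_of_between (Finset.max'_mem T hT)
            (Finset.le_max' A _ (hTA (Finset.max'_mem T hT)))
          intro s hs _
          exact Finset.le_max' T s hs
        refine le_antisymm (Finset.max'_le _ _ _ ?_) (Finset.le_max' (arc A T tM) _ hAmax)
        intro y hy
        exact Finset.le_max' A y (arc_subset A T tM hy)


/-! ### Non-interlacing basics -/

def NIF (S T : Finset (Fin n)) : Prop :=
  NonInterlacingS (↑S : Set (Fin n)) (↑T : Set (Fin n))

theorem NIF_def {S T : Finset (Fin n)} :
    NIF S T ↔ ∀ a ∈ S, ∀ b ∈ S, ∀ c ∈ T, ∀ d ∈ T, a < b → c < d →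
      ((a : ℤ) - (c : ℤ)) * ((a : ℤ) - (d : ℤ)) * ((b : ℤ) - (c : ℤ)) * ((b : ℤ) - (d : ℤ)) > 0 := by
  constructor
  · intro h a ha b hb c hc d hd hab hcd
    exact h a (Finset.mem_coe.mpr ha) b (Finset.mem_coe.mpr hb) c (Finset.mem_coe.mpr hc)
      d (Finset.mem_coe.mpr hd) hab hcd
  · intro h a ha b hb c hc d hd hab hcd
    exact h a (Finset.mem_coe.mp ha) b (Finset.mem_coe.mp hb) c (Finset.mem_coe.mp hc)
      d (Finset.mem_coe.mp hd) hab hcd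

theorem NIF_symm {S T : Finset (Fin n)} (h : NIF S T) : NIF T S := by
  rw [NIF_def] at h ⊢
  intro a ha b hb c hc d hd hab hcd
  have := h c hc d hd a ha b hb hcd hab
  nlinarith [this]

theorem NIF_mono {S T S' T' : Finset (Fin n)} (hS : S' ⊆ S) (hT : T' ⊆ T) (h : NIF S T) :
    NIF S' T' := by
  rw [NIF_def] at h ⊢
  intro a ha b hb c hc d hd hab hcd
  exact h a (hS ha) b (hS hb) c (hT hc) d (hT hd) hab hcd

theorem NIF_of_separated {S T : Finset (Fin n)}
    (h : ∀ c ∈ T, (∀ a ∈ S, a < c) ∨ (∀ a ∈ S, c < a)) : NIF S T := by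
  rw [NIF_def]
  intro a ha b hb c hc d hd hab hcd
  have h1 : ((a:ℤ) - c) * ((b:ℤ) - c) > 0 := by
    rcases h c hc with h' | h'
    · have l1 : (a:ℤ) < (c:ℤ) := by exact_mod_cast h' a ha
      have l2 : (b:ℤ) < (c:ℤ) := by exact_mod_cast h' b hb
      exact mul_pos_of_neg_of_neg (by linarith) (by linarith)
    · have l1 : (c:ℤ) < (a:ℤ) := by exact_mod_cast h' a ha
      have l2 : (c:ℤ) < (b:ℤ) := by exact_mod_cast h' b hb
      exact mul_pos (by linarith) (by linarith)
  have h2 : ((a:ℤ) - d) * ((b:ℤ) - d) > 0 := by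
    rcases h d hd with h' | h'
    · have l1 : (a:ℤ) < (d:ℤ) := by exact_mod_cast h' a ha
      have l2 : (b:ℤ) < (d:ℤ) := by exact_mod_cast h' b hb
      exact mul_pos_of_neg_of_neg (by linarith) (by linarith)
    · have l1 : (d:ℤ) < (a:ℤ) := by exact_mod_cast h' a ha
      have l2 : (d:ℤ) < (b:ℤ) := by exact_mod_cast h' b hb
      exact mul_pos (by linarith) (by linarith)
  nlinarith [mul_pos h1 h2]

theorem NIF_disjoint {S T : Finset (Fin n)} (h : NIF S T) (hS : 2 ≤ S.card)
    (hT : 2 ≤ T.card) : _root_.Disjoint S T := by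
  rw [Finset.disjoint_left]
  intro x hxS hxT
  rw [NIF_def] at h
  obtain ⟨s, hs, hsx⟩ := Finset.exists_mem_ne hS x
  obtain ⟨t, ht, htx⟩ := Finset.exists_mem_ne hT x
  rcases lt_or_gt_of_ne hsx with h1 | h1 <;> rcases lt_or_gt_of_ne htx with h2 | h2
  · have := h s hs x hxS t ht x hxT h1 h2
    simp only [sub_self, mul_zero, zero_mul] at this
    exact lt_irrefl 0 this
  · have := h s hs x hxS x hxT t ht h1 h2
    simp only [sub_self, mul_zero, zero_mul] at this
    exact lt_irrefl 0 this
  · have := h x hxS s hs t ht x hxT h1 h2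
    simp only [sub_self, mul_zero, zero_mul] at this
    exact lt_irrefl 0 this
  · have := h x hxS s hs x hxT t ht h1 h2
    simp only [sub_self, mul_zero, zero_mul] at this
    exact lt_irrefl 0 this

/-- interlacing pattern gives a negative product -/
theorem interlaced_product_neg {w x y z : ℤ} (h1 : w < x) (h2 : x < y) (h3 : y < z) :
    (w - x) * (w - z) * (y - x) * (y - z) < 0 := by
  have q1 : (w - x) * (w - z) > 0 :=
    mul_pos_of_neg_of_neg (by linarith) (by linarith)
  have q2 : (y - x) * (y - z) < 0 :=
    mul_neg_of_pos_of_neg (by linarith) (by linarith)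
  calc (w - x) * (w - z) * (y - x) * (y - z) = ((w - x) * (w - z)) * ((y - x) * (y - z)) := by
        ring
    _ < 0 := mul_neg_of_pos_of_neg q1 q2

/-! ### Arcs are mutually non-interlacing -/

theorem arc_sep {A T : Finset (Fin n)} (hT : T.Nonempty) {t t' : Fin n}
    (ht : t ∈ T) (ht' : t' ∈ T) (htt' : t < t') : NIF (arc A T t) (arc A T t') := by
  apply NIF_of_separated
  intro c hc
  rcases mem_arc_cases hT hc with h | ⟨hlt, _⟩
  · -- t' ≤ c : all elements of arc t are < t' ≤ c
    left
    intro a ha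
    exact lt_of_lt_of_le (mem_arc_lt ht' htt' ha) h
  · -- c below all of T : c < t ≤ a  (a cannot be in wrap since t < t' ≤ max)
    right
    intro a ha
    rcases mem_arc_cases hT ha with h' | ⟨_, hmax⟩
    · exact lt_of_lt_of_le (hlt t ht) h'
    · exfalso
      have : t' ≤ T.max' hT := Finset.le_max' T t' ht'
      rw [← hmax] at this
      exact absurd htt' (not_lt.mpr this)

theorem arc_sep' {A T : Finset (Fin n)} (hT : T.Nonempty) {t t' : Fin n}
    (ht : t ∈ T) (ht' : t' ∈ T) (htt' : t ≠ t') : NIF (arc A T t) (arc A T t') := by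
  rcases lt_or_gt_of_ne htt' with h | h
  · exact arc_sep hT ht ht' h
  · exact NIF_symm (arc_sep hT ht' ht h)

/-! ### Anchor is constant on sets non-interlacing with T -/

theorem anchor_const_on {A T R : Finset (Fin n)} (hTA : T ⊆ A) (hT2 : 2 ≤ T.card)
    (hR2 : 2 ≤ R.card) (hdisj : _root_.Disjoint T R) (hNI : NIF T R) :
    ∀ r1 ∈ R, ∀ r2 ∈ R, anchor T r1 = anchor T r2 := by
  have hT : T.Nonempty := Finset.card_pos.mp (by omega)
  -- enough to prove it for r1 < r2
  suffices H : ∀ r1 ∈ R, ∀ r2 ∈ R, r1 < r2 → anchor T r1 = anchor T r2 by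
    intro r1 h1 r2 h2
    rcases lt_trichotomy r1 r2 with h | h | h
    · exact H r1 h1 r2 h2 h
    · rw [h]
    · exact (H r2 h2 r1 h1 h).symm
  intro r1 h1 r2 h2 h12
  have hNI' := NIF_def.mp hNI
  by_cases hb1 : ∃ t ∈ T, t ≤ r1
  · obtain ⟨t1, ht1, ht1r⟩ := hb1
    have ha1T : anchor T r1 ∈ T := anchor_mem hT r1
    have ha1le : anchor T r1 ≤ r1 := anchor_le' ht1 ht1r
    have ha1ne : anchor T r1 ≠ r1 := fun h =>
      Finset.disjoint_left.mp hdisj (h ▸ ha1T) h1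
    have ha1lt : anchor T r1 < r1 := lt_of_le_of_ne ha1le ha1ne
    have ha12 : anchor T r1 ≤ anchor T r2 := anchor_ge ha1T (le_trans ha1le (le_of_lt h12))
    by_contra hne
    have ha12lt : anchor T r1 < anchor T r2 := lt_of_le_of_ne ha12 hne
    have ha2T : anchor T r2 ∈ T := anchor_mem hT r2
    have ha2le : anchor T r2 ≤ r2 := anchor_le' ha1T (le_trans ha1le (le_of_lt h12))
    have ha2ne : anchor T r2 ≠ r2 := fun h =>
      Finset.disjoint_left.mp hdisj (h ▸ ha2T) h2
    have ha2lt : anchor T r2 < r2 := lt_of_le_of_ne ha2le ha2ne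
    have hr1a2 : r1 < anchor T r2 := by
      by_contra h
      have := anchor_ge ha2T (le_of_not_gt h)
      exact absurd ha12lt (not_lt.mpr this)
    -- pattern anchor r1 < r1 < anchor r2 < r2
    have hprod := hNI' (anchor T r1) ha1T (anchor T r2) ha2T r1 h1 r2 h2 ha12lt h12
    have c1 : ((anchor T r1 : Fin n) : ℤ) < ((r1 : Fin n) : ℤ) := by exact_mod_cast ha1lt
    have c2 : ((r1 : Fin n) : ℤ) < ((anchor T r2 : Fin n) : ℤ) := by exact_mod_cast hr1a2
    have c3 : ((anchor T r2 : Fin n) : ℤ) < ((r2 : Fin n) : ℤ) := by exact_mod_cast ha2lt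
    have := interlaced_product_neg c1 c2 c3
    linarith
  · push_neg at hb1
    have ha1 : anchor T r1 = T.max' hT := anchor_max hT hb1
    by_cases hb2 : ∃ t ∈ T, t ≤ r2
    · obtain ⟨t2, ht2, ht2r⟩ := hb2
      have ha2T : anchor T r2 ∈ T := anchor_mem hT r2
      have ha2le : anchor T r2 ≤ r2 := anchor_le' ht2 ht2r
      have ha2ne : anchor T r2 ≠ r2 := fun h =>
        Finset.disjoint_left.mp hdisj (h ▸ ha2T) h2
      have ha2lt : anchor T r2 < r2 := lt_of_le_of_ne ha2le ha2ne
      by_contra hne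
      -- anchor r2 ≠ max T, so anchor r2 < max T and r2 < max T
      have ha2max : anchor T r2 ≤ T.max' hT := Finset.le_max' T _ ha2T
      have ha2maxlt : anchor T r2 < T.max' hT := by
        rcases lt_or_eq_of_le ha2max with h | h
        · exact h
        · exact absurd (ha1.trans h.symm) hne
      have hr2max : r2 < T.max' hT := by
        by_contra h
        have := anchor_ge (Finset.max'_mem T hT) (le_of_not_gt h)
        exact absurd ha2maxlt (not_lt.mpr this)
      have hr1a2 : r1 < anchor T r2 := hb1 _ ha2T
      -- pattern r1 < anchor r2 < r2 < max T
      have hNIR := NIF_def.mp (NIF_symm hNI)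
      have hprod := hNIR r1 h1 r2 h2 (anchor T r2) ha2T (T.max' hT)
        (Finset.max'_mem T hT) h12 ha2maxlt
      have c1 : ((r1 : Fin n) : ℤ) < ((anchor T r2 : Fin n) : ℤ) := by exact_mod_cast hr1a2
      have c2 : ((anchor T r2 : Fin n) : ℤ) < ((r2 : Fin n) : ℤ) := by exact_mod_cast ha2lt
      have c3 : ((r2 : Fin n) : ℤ) < ((T.max' hT : Fin n) : ℤ) := by exact_mod_cast hr2max
      have := interlaced_product_neg c1 c2 c3
      linarith
    · push_neg at hb2
      rw [ha1, anchor_max hT hb2]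

/-! ### Permutation disjointness from support bounds -/

theorem support_subset_perm_disjoint {σ τ : Equiv.Perm (Fin n)} {S T : Finset (Fin n)}
    (hσ : σ.support ⊆ S) (hτ : τ.support ⊆ T) (h : _root_.Disjoint S T) :
    σ.Disjoint τ := by
  intro x
  by_cases hx : σ x = x
  · left; exact hx
  · right
    have : x ∈ σ.support := Equiv.Perm.mem_support.mpr hx
    have hxS : x ∈ S := hσ this
    have hxT : x ∉ T := Finset.disjoint_left.mp h hxS
    by_contra hτx
    exact hxT (hτ (Equiv.Perm.mem_support.mpr hτx))

theorem support_list_prod_subset (l : List (Equiv.Perm (Fin n))) (S : Finset (Fin n))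
    (h : ∀ p ∈ l, p.support ⊆ S) : l.prod.support ⊆ S := by
  induction l with
  | nil => simp
  | cons p l ih =>
    rw [List.prod_cons]
    exact le_trans (Equiv.Perm.support_mul_le p l.prod)
      (sup_le (h p (List.mem_cons_self))
        (ih (fun q hq => h q (List.mem_cons_of_mem _ hq))))

theorem support_dc_subset (M : Finset (Fin n)) : (dc M).support ⊆ M := dc_support_subset M

/-! ### Interchange of products -/

theorem prod_mul_prod_of_disjoint (ts : List (Fin n)) (F G : Fin n → Equiv.Perm (Fin n))
    (h : ts.Pairwise (fun t t' => (F t).Disjoint (F t') ∧ (F t).Disjoint (G t') ∧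
      (G t).Disjoint (F t') ∧ (G t).Disjoint (G t'))) :
    (ts.map (fun t => F t * G t)).prod = (ts.map F).prod * (ts.map G).prod := by
  induction ts with
  | nil => simp
  | cons t ts ih =>
    obtain ⟨hhead, htail⟩ := List.pairwise_cons.mp h
    rw [List.map_cons, List.map_cons, List.map_cons, List.prod_cons, List.prod_cons,
      List.prod_cons, ih htail]
    have hcomm : Commute (G t) ((ts.map F).prod) := by
      apply Equiv.Perm.Disjoint.commute
      apply Equiv.Perm.disjoint_prod_right
      intro g hg
      rw [List.mem_map] at hg
      obtain ⟨t', ht', rfl⟩ := hg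
      exact (hhead t' ht').2.2.1
    rw [mul_assoc (F t), mul_assoc (F t)]
    congr 1
    rw [← mul_assoc, hcomm.eq, mul_assoc]

/-! ### Grouping a list of pairwise commuting factors by fibers -/

theorem prod_group (B : Fin n → Finset (Fin n)) (ts : List (Fin n))
    (l : List (Finset (Fin n))) (hnd : ts.Nodup)
    (hcomm : List.Pairwise Commute (l.map dc))
    (hcov : ∀ R ∈ l, ∃ t ∈ ts, R ⊆ B t)
    (hexc : ∀ R ∈ l, ∀ t t', R ⊆ B t → R ⊆ B t' → t = t') :
    ((ts.map (fun t => ((l.filter (fun R => decide (R ⊆ B t))).map dc).prod)).prod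
        = (l.map dc).prod) ∧
      ((ts.map (fun t => ((l.filter (fun R => decide (R ⊆ B t))).map
          (fun M => M.card - 1)).sum)).sum
        = (l.map (fun M => M.card - 1)).sum) := by
  induction ts generalizing l with
  | nil =>
    have hl : l = [] := by
      cases l with
      | nil => rfl
      | cons R l' =>
        obtain ⟨t, ht, _⟩ := hcov R (List.mem_cons_self)
        exact absurd ht (List.not_mem_nil)
    subst hl
    simp
  | cons t ts ih =>
    have hnd' : ts.Nodup := (List.nodup_cons.mp hnd).2
    have htts : t ∉ ts := (List.nodup_cons.mp hnd).1
    set p : Finset (Fin n) → Bool := fun R => decide (R ⊆ B t) with hp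
    have hperm : List.Perm (l.filter p ++ l.filter (fun R => !p R)) l :=
      List.filter_append_perm p l
    have hpermdc : List.Perm ((l.filter p ++ l.filter (fun R => !p R)).map dc) (l.map dc) :=
      hperm.map dc
    have hcomm' : List.Pairwise Commute ((l.filter p ++ l.filter (fun R => !p R)).map dc) :=
      (hpermdc.pairwise_iff (fun h => Commute.symm h)).mpr hcomm
    have hprodsplit : (l.map dc).prod
        = ((l.filter p).map dc).prod * ((l.filter (fun R => !p R)).map dc).prod := by
      rw [← List.Perm.prod_eq' hpermdc hcomm', List.map_append, List.prod_append]
    have hsumsplit : (l.map (fun M => M.card - 1)).sum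
        = ((l.filter p).map (fun M => M.card - 1)).sum
          + ((l.filter (fun R => !p R)).map (fun M => M.card - 1)).sum := by
      rw [← (hperm.map (fun M => M.card - 1)).sum_eq, List.map_append, List.sum_append]
    -- for t' ∈ ts the fibers over l and over l.filter (!p) agree
    have hfib : ∀ t' ∈ ts,
        (l.filter (fun R => !p R)).filter (fun R => decide (R ⊆ B t'))
          = l.filter (fun R => decide (R ⊆ B t')) := by
      intro t' ht'
      rw [List.filter_filter]
      apply List.filter_congr
      intro R hR
      by_cases hq : R ⊆ B t'
      · have hnp : ¬(R ⊆ B t) := by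
          intro hpt
          exact htts ((hexc R hR t t' hpt hq) ▸ ht')
        simp [p, hq, hnp]
      · simp [hq]
    have ihl := ih (l.filter (fun R => !p R))
      hnd'
      (List.Pairwise.sublist (List.Sublist.map dc List.filter_sublist) hcomm)
      (by
        intro R hR
        have hRl : R ∈ l := List.mem_of_mem_filter hR
        obtain ⟨t'', ht'', hsub⟩ := hcov R hRl
        rcases List.mem_cons.mp ht'' with rfl | h
        · exfalso
          have h1 : (!p R) = true := (List.mem_filter.mp hR).2
          have h2 : p R = true := decide_eq_true hsub
          rw [h2] at h1
          simp at h1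
        · exact ⟨t'', h, hsub⟩)
      (fun R hR => hexc R (List.mem_of_mem_filter hR))
    constructor
    · rw [List.map_cons, List.prod_cons, hprodsplit]
      congr 1
      rw [← ihl.1]
      congr 1
      apply List.map_congr_left
      intro t' ht'
      rw [hfib t' ht']
    · rw [List.map_cons, List.sum_cons, hsumsplit]
      congr 1
      rw [← ihl.2]
      congr 1
      apply List.map_congr_left
      intro t' ht'
      rw [hfib t' ht']

/-! ### Reflection length of a product of disjoint descending cycles -/

theorem perm_disjoint_dc {M N : Finset (Fin n)} (h : _root_.Disjoint M N) :
    (dc M).Disjoint (dc N) :=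
  support_subset_perm_disjoint (dc_support_subset M) (dc_support_subset N) h

theorem perm_disjoint_dc_prod {M : Finset (Fin n)} {l : List (Finset (Fin n))}
    (h : ∀ N ∈ l, _root_.Disjoint M N) : (dc M).Disjoint (l.map dc).prod := by
  apply Equiv.Perm.disjoint_prod_right
  intro g hg
  rw [List.mem_map] at hg
  obtain ⟨N, hN, rfl⟩ := hg
  exact perm_disjoint_dc (h N hN)

theorem refLen_prod (l : List (Finset (Fin n))) (h2 : ∀ M ∈ l, 2 ≤ M.card)
    (hd : l.Pairwise (fun M N => _root_.Disjoint M N)) :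
    refLen ((l.map dc).prod) = (l.map (fun M => M.card - 1)).sum := by
  induction l with
  | nil => simpa using refLen_one
  | cons M l ih =>
    rw [List.map_cons, List.prod_cons, List.map_cons, List.sum_cons]
    obtain ⟨hhead, htail⟩ := List.pairwise_cons.mp hd
    rw [refLen_mul_disjoint (perm_disjoint_dc_prod hhead)]
    rw [refLen_dc (h2 M (List.mem_cons_self)), ih (fun N hN => h2 N (List.mem_cons_of_mem _ hN)) htail]


theorem sort_map_sum (T : Finset (Fin n)) (g : Fin n → ℕ) :
    ((T.sort (· ≤ ·)).map g).sum = ∑ t ∈ T, g t := by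
  rw [((T.sort_perm_toList (· ≤ ·)).map g).sum_eq, Finset.sum_map_toList]

theorem list_sum_map_add (l : List (Fin n)) (f g : Fin n → ℕ) :
    (l.map (fun x => f x + g x)).sum = (l.map f).sum + (l.map g).sum := by
  induction l with
  | nil => simp
  | cons a l ih => simp [ih]; omega

theorem list_sum_map_one (l : List (Fin n)) : (l.map (fun _ => (1:ℕ))).sum = l.length := by
  induction l with
  | nil => rfl
  | cons a l ih => simp [ih]; omega

theorem core_base (A : Finset (Fin n)) (hA : A.Nonempty) :
    ∃ Ms : List (Finset (Fin n)),
      (∀ M ∈ Ms, M ⊆ A ∧ 2 ≤ M.card) ∧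
      Ms.Pairwise NIF ∧
      (Ms.map dc).prod = dc A ∧
      (Ms.map (fun M => M.card - 1)).sum + 1 = A.card := by
  by_cases h2 : 2 ≤ A.card
  · refine ⟨[A], ?_, List.pairwise_singleton _ _, by simp, by simp; omega⟩
    intro M hM
    rw [List.mem_singleton] at hM
    subst hM
    exact ⟨subset_rfl, h2⟩
  · have h1 : A.card = 1 := by
      have := Finset.card_pos.mpr hA
      omega
    exact ⟨[], by simp, List.Pairwise.nil, by simp [dc_eq_one (by omega : A.card ≤ 1)],
      by simp [h1]⟩

theorem core (k : ℕ) : ∀ (A : Finset (Fin n)) (Ts : List (Finset (Fin n))),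
    Ts.length ≤ k → A.Nonempty →
    (∀ T ∈ Ts, T ⊆ A ∧ 2 ≤ T.card) →
    Ts.Pairwise NIF →
    ∃ Ms : List (Finset (Fin n)),
      (∀ M ∈ Ms, M ⊆ A ∧ 2 ≤ M.card) ∧
      Ms.Pairwise NIF ∧
      (Ms.map dc).prod * (Ts.map dc).prod = dc A ∧
      (Ms.map (fun M => M.card - 1)).sum + (Ts.map (fun M => M.card - 1)).sum + 1 = A.card := by
  induction k with
  | zero =>
    intro A Ts hlen hA hcond hpw
    have hTs : Ts = [] := List.length_eq_zero_iff.mp (Nat.le_zero.mp hlen)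
    subst hTs
    obtain ⟨Ms, h1, h2, h3, h4⟩ := core_base A hA
    exact ⟨Ms, h1, h2, by simpa using h3, by simpa using h4⟩
  | succ k ih =>
    intro A Ts hlen hA hcond hpw
    cases Ts with
    | nil =>
      obtain ⟨Ms, h1, h2, h3, h4⟩ := core_base A hA
      exact ⟨Ms, h1, h2, by simpa using h3, by simpa using h4⟩
    | cons T rest =>
      obtain ⟨hTA, hT2⟩ := hcond T (List.mem_cons_self)
      have hT : T.Nonempty := Finset.card_pos.mp (by omega)
      have hrest_cond : ∀ R ∈ rest, R ⊆ A ∧ 2 ≤ R.card :=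
        fun R hR => hcond R (List.mem_cons_of_mem _ hR)
      have hheadNIF : ∀ R ∈ rest, NIF T R := (List.pairwise_cons.mp hpw).1
      have hrest_pw : rest.Pairwise NIF := (List.pairwise_cons.mp hpw).2
      have hdisjTR : ∀ R ∈ rest, _root_.Disjoint T R :=
        fun R hR => NIF_disjoint (hheadNIF R hR) hT2 (hrest_cond R hR).2
      have hRsub : ∀ R ∈ rest, ∃ t ∈ T, R ⊆ arc A T t := by
        intro R hR
        have hRne : R.Nonempty := Finset.card_pos.mp (by have := (hrest_cond R hR).2; omega)
        obtain ⟨r₀, hr₀⟩ := hRne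
        refine ⟨anchor T r₀, anchor_mem hT r₀, ?_⟩
        intro r hr
        refine mem_arc.mpr ⟨(hrest_cond R hR).1 hr, ?_⟩
        exact anchor_const_on hTA hT2 (hrest_cond R hR).2 (hdisjTR R hR) (hheadNIF R hR)
          r hr r₀ hr₀
      set ts := T.sort (· ≤ ·) with hts
      have hnd : ts.Nodup := Finset.sort_nodup T _
      have hmem_ts : ∀ t, t ∈ ts ↔ t ∈ T := fun t => Finset.mem_sort _
      have hts_lt : ts.Pairwise (· < ·) := (Finset.sortedLT_sort T).pairwise
      have hcov : ∀ R ∈ rest, ∃ t ∈ ts, R ⊆ arc A T t := by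
        intro R hR
        obtain ⟨t, ht, hsub⟩ := hRsub R hR
        exact ⟨t, (hmem_ts t).mpr ht, hsub⟩
      have hexc : ∀ R ∈ rest, ∀ t t', R ⊆ arc A T t → R ⊆ arc A T t' → t = t' := by
        intro R hR t t' h1 h2
        by_contra hne
        have hRne : R.Nonempty := Finset.card_pos.mp (by have := (hrest_cond R hR).2; omega)
        obtain ⟨r, hr⟩ := hRne
        exact Finset.disjoint_left.mp (arc_disjoint hne) (h1 hr) (h2 hr)
      have hpwdisj : rest.Pairwise (fun M N => _root_.Disjoint M N) :=
        List.Pairwise.imp_of_mem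
          (fun {a b} ha hb hNI =>
            NIF_disjoint hNI (hrest_cond a ha).2 (hrest_cond b hb).2) hrest_pw
      have hcommrest : List.Pairwise Commute (rest.map dc) := by
        rw [List.pairwise_map]
        exact hpwdisj.imp (fun h => (perm_disjoint_dc h).commute)
      -- recursive calls, one per arc
      have F : ∀ t, t ∈ T → ∃ Ms : List (Finset (Fin n)),
          (∀ M ∈ Ms, M ⊆ arc A T t ∧ 2 ≤ M.card) ∧
          Ms.Pairwise NIF ∧
          (Ms.map dc).prod
            * (((rest.filter (fun R => decide (R ⊆ arc A T t))).map dc)).prod = dc (arc A T t) ∧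
          (Ms.map (fun M => M.card - 1)).sum
            + ((rest.filter (fun R => decide (R ⊆ arc A T t))).map (fun M => M.card - 1)).sum
            + 1 = (arc A T t).card := by
        intro t ht
        have harcne : (arc A T t).Nonempty := ⟨t, mem_arc.mpr ⟨hTA ht, anchor_self ht⟩⟩
        have hlen' : (rest.filter (fun R => decide (R ⊆ arc A T t))).length ≤ k := by
          have := List.length_filter_le (fun R => decide (R ⊆ arc A T t)) rest
          have hlr : rest.length ≤ k := by simpa using Nat.le_of_succ_le_succ hlen
          omega
        have hcond' : ∀ R ∈ rest.filter (fun R => decide (R ⊆ arc A T t)),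
            R ⊆ arc A T t ∧ 2 ≤ R.card := by
          intro R hR
          have h1 := (List.mem_filter.mp hR).1
          have h2 := (List.mem_filter.mp hR).2
          exact ⟨of_decide_eq_true h2, (hrest_cond R h1).2⟩
        have hpw' : (rest.filter (fun R => decide (R ⊆ arc A T t))).Pairwise NIF :=
          List.Pairwise.sublist List.filter_sublist hrest_pw
        obtain ⟨Ms, h1, h2, h3, h4⟩ := ih (arc A T t)
          (rest.filter (fun R => decide (R ⊆ arc A T t))) hlen' harcne hcond' hpw'
        exact ⟨Ms, h1, h2, h3, h4⟩
      set Mss : Fin n → List (Finset (Fin n)) :=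
        fun t => if ht : t ∈ T then Classical.choose (F t ht) else [] with hMss
      have hS : ∀ t (ht : t ∈ T),
          (∀ M ∈ Mss t, M ⊆ arc A T t ∧ 2 ≤ M.card) ∧
          (Mss t).Pairwise NIF ∧
          ((Mss t).map dc).prod
            * (((rest.filter (fun R => decide (R ⊆ arc A T t))).map dc)).prod
            = dc (arc A T t) ∧
          ((Mss t).map (fun M => M.card - 1)).sum
            + ((rest.filter (fun R => decide (R ⊆ arc A T t))).map (fun M => M.card - 1)).sum
            + 1 = (arc A T t).card := by
        intro t ht
        have : Mss t = Classical.choose (F t ht) := by simp only [hMss]; rw [dif_pos ht]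
        rw [this]
        exact Classical.choose_spec (F t ht)
      refine ⟨(ts.map Mss).flatten, ?_, ?_, ?_, ?_⟩
      · -- membership conditions
        intro M hM
        rw [List.mem_flatten] at hM
        obtain ⟨lst, hlst, hMlst⟩ := hM
        rw [List.mem_map] at hlst
        obtain ⟨t, htts, rfl⟩ := hlst
        have ht : t ∈ T := (hmem_ts t).mp htts
        obtain ⟨hsub, hcard⟩ := (hS t ht).1 M hMlst
        exact ⟨subset_trans hsub (arc_subset A T t), hcard⟩
      · -- pairwise NIF
        rw [List.pairwise_flatten]
        constructor
        · intro lst hlst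
          rw [List.mem_map] at hlst
          obtain ⟨t, htts, rfl⟩ := hlst
          exact ((hS t ((hmem_ts t).mp htts)).2).1
        · rw [List.pairwise_map]
          have : ts.Pairwise (fun t t' => t < t' ∧ t ∈ T ∧ t' ∈ T) :=
            List.Pairwise.imp_of_mem
              (fun {a b} ha hb hlt => ⟨hlt, (hmem_ts a).mp ha, (hmem_ts b).mp hb⟩) hts_lt
          refine this.imp_of_mem ?_
          intro t t' htts ht'ts ⟨hlt, ht, ht'⟩
          intro M hM M' hM'
          have h1 := ((hS t ht).1 M hM).1
          have h2 := ((hS t' ht').1 M' hM').1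
          exact NIF_mono h1 h2 (arc_sep hT ht ht' hlt)
      · -- the product equation
        have hVW : ∀ t ∈ ts, ((Mss t).map dc).prod
            * (((rest.filter (fun R => decide (R ⊆ arc A T t))).map dc)).prod
            = dc (arc A T t) := fun t htts => ((hS t ((hmem_ts t).mp htts)).2).2.1
        have hsuppV : ∀ t ∈ T, (((Mss t).map dc).prod).support ⊆ arc A T t := by
          intro t ht
          apply support_list_prod_subset
          intro p hp
          rw [List.mem_map] at hp
          obtain ⟨M, hM, rfl⟩ := hp
          exact subset_trans (dc_support_subset M) ((hS t ht).1 M hM).1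
        have hsuppW : ∀ t ∈ T,
            ((((rest.filter (fun R => decide (R ⊆ arc A T t))).map dc)).prod).support
              ⊆ arc A T t := by
          intro t ht
          apply support_list_prod_subset
          intro p hp
          rw [List.mem_map] at hp
          obtain ⟨R, hR, rfl⟩ := hp
          exact subset_trans (dc_support_subset R) (of_decide_eq_true (List.mem_filter.mp hR).2)
        have hgroup := prod_group (arc A T) ts rest hnd hcommrest hcov hexc
        have hflat : (((ts.map Mss).flatten).map dc).prod
            = (ts.map (fun t => ((Mss t).map dc).prod)).prod := by
          rw [List.map_flatten, List.prod_flatten, List.map_map, List.map_map]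
          rfl
        rw [List.map_cons, List.prod_cons, hflat, ← hgroup.1]
        have hcommTW : Commute (dc T)
            ((ts.map (fun t => (((rest.filter (fun R => decide (R ⊆ arc A T t))).map dc)).prod)).prod) := by
          apply Equiv.Perm.Disjoint.commute
          apply Equiv.Perm.disjoint_prod_right
          intro g hg
          rw [List.mem_map] at hg
          obtain ⟨t, htts, rfl⟩ := hg
          apply Equiv.Perm.disjoint_prod_right
          intro g' hg'
          rw [List.mem_map] at hg'
          obtain ⟨R, hR, rfl⟩ := hg'
          exact perm_disjoint_dc (hdisjTR R (List.mem_of_mem_filter hR))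
        rw [← mul_assoc, mul_assoc _ (dc T) _, hcommTW.eq, ← mul_assoc]
        have hinter := prod_mul_prod_of_disjoint ts
          (fun t => ((Mss t).map dc).prod)
          (fun t => (((rest.filter (fun R => decide (R ⊆ arc A T t))).map dc)).prod)
          (by
            have : ts.Pairwise (fun t t' => t ≠ t' ∧ t ∈ T ∧ t' ∈ T) :=
              List.Pairwise.imp_of_mem
                (fun {a b} ha hb hlt => ⟨ne_of_lt hlt, (hmem_ts a).mp ha, (hmem_ts b).mp hb⟩)
                hts_lt
            refine this.imp_of_mem ?_
            intro t t' htts ht'ts ⟨hne, ht, ht'⟩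
            have hd := arc_disjoint (A := A) (T := T) hne
            exact ⟨support_subset_perm_disjoint (hsuppV t ht) (hsuppV t' ht') hd,
              support_subset_perm_disjoint (hsuppV t ht) (hsuppW t' ht') hd,
              support_subset_perm_disjoint (hsuppW t ht) (hsuppV t' ht') hd,
              support_subset_perm_disjoint (hsuppW t ht) (hsuppW t' ht') hd⟩)
        rw [← hinter]
        have : (ts.map (fun t => ((Mss t).map dc).prod
            * (((rest.filter (fun R => decide (R ⊆ arc A T t))).map dc)).prod))
            = ts.map (fun t => dc (arc A T t)) := List.map_congr_left hVW
        rw [this]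
        exact dc_arcs hTA hT2
      · -- the counting equation
        have hflat : (((ts.map Mss).flatten).map (fun M => M.card - 1)).sum
            = (ts.map (fun t => ((Mss t).map (fun M => M.card - 1)).sum)).sum := by
          rw [List.map_flatten, List.sum_flatten, List.map_map, List.map_map]
          rfl
        have hgroup := (prod_group (arc A T) ts rest hnd hcommrest hcov hexc).2
        have hsum4 : (ts.map (fun t => ((Mss t).map (fun M => M.card - 1)).sum
            + ((rest.filter (fun R => decide (R ⊆ arc A T t))).map (fun M => M.card - 1)).sum
            + 1)).sum = (ts.map (fun t => (arc A T t).card)).sum := by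
          apply congrArg
          apply List.map_congr_left
          intro t htts
          exact ((hS t ((hmem_ts t).mp htts)).2).2.2
        rw [list_sum_map_add, list_sum_map_add] at hsum4
        have hone : (ts.map (fun _ => 1)).sum = T.card := by
          rw [list_sum_map_one, hts, Finset.length_sort]
        have harcsum : (ts.map (fun t => (arc A T t).card)).sum = A.card := by
          rw [hts, sort_map_sum]
          exact (card_eq_sum_arc hT).symm
        rw [hone, harcsum, hgroup] at hsum4
        rw [List.map_cons, List.sum_cons, hflat]
        omega


theorem dc_univ (hn : 0 < n) : dc (Finset.univ : Finset (Fin n)) = (finRotate n)⁻¹ := by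
  haveI : NeZero n := ⟨by omega⟩
  apply Equiv.ext
  intro x
  rw [finRotate_inv_apply]
  by_cases hx : x = (0 : Fin n)
  · subst hx
    have hfe : ¬((Finset.univ : Finset (Fin n)).filter (· < (0:Fin n))).Nonempty := by
      rintro ⟨y, hy⟩
      rw [Finset.mem_filter] at hy
      exact absurd hy.2 (by simp [Fin.lt_def])
    rw [dc_apply_min (Finset.mem_univ _) hfe]
    refine le_antisymm (Finset.max'_le _ _ _ ?_) (Finset.le_max' _ _ (Finset.mem_univ _))
    intro y _
    rw [Fin.le_def, fin_coe_sub_one, if_pos rfl]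
    omega
  · have hlt : (x - 1 : Fin n) < x := by
      rw [Fin.lt_def, fin_coe_sub_one, if_neg hx]
      have : (x : ℕ) ≠ 0 := fun h => hx (Fin.ext h)
      omega
    have hm : (x - 1 : Fin n) ∈ (Finset.univ : Finset (Fin n)).filter (· < x) :=
      Finset.mem_filter.mpr ⟨Finset.mem_univ _, hlt⟩
    rw [dc_apply_of_lt (Finset.mem_univ _) ⟨_, hm⟩]
    refine le_antisymm (Finset.max'_le _ _ _ ?_) (Finset.le_max' _ _ hm)
    intro y hy
    rw [Finset.mem_filter] at hy
    have h1 : (y : ℕ) < (x : ℕ) := hy.2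
    rw [Fin.le_def, fin_coe_sub_one, if_neg hx]
    omega

theorem IsPDCProd_one : IsPDCProd (1 : Equiv.Perm (Fin n)) :=
  ⟨[], by simp, List.Pairwise.nil, List.prod_nil⟩

theorem set_support_dc {M : Finset (Fin n)} (h2 : 2 ≤ M.card) :
    {x | dc M x ≠ x} = (↑M : Set (Fin n)) := by
  ext x
  simp only [Set.mem_setOf_eq, Finset.mem_coe]
  constructor
  · intro h
    exact dc_support_subset M (Equiv.Perm.mem_support.mpr h)
  · intro h
    exact dc_apply_ne h h2

theorem IsPDCProd_of_list (Ms : List (Finset (Fin n)))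
    (h1 : ∀ M ∈ Ms, 2 ≤ M.card) (h2 : Ms.Pairwise NIF) :
    IsPDCProd ((Ms.map dc).prod) := by
  refine ⟨Ms.map dc, ?_, ?_, rfl⟩
  · intro c hc
    rw [List.mem_map] at hc
    obtain ⟨M, hM, rfl⟩ := hc
    exact dc_isDescendingCycle (h1 M hM)
  · rw [List.pairwise_map]
    apply List.Pairwise.imp_of_mem ?_ h2
    intro M N hM hN hNIF
    rw [set_support_dc (h1 M hM), set_support_dc (h1 N hN)]
    exact hNIF

theorem parallel_descending_le_deltaBar' (L : List (Equiv.Perm (Fin n)))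
    (hL : ∀ c ∈ L, IsDescendingCycle c)
    (hpar : L.Pairwise (fun c d => NonInterlacingS {x | c x ≠ x} {x | d x ≠ x})) :
    ∃ μ ν : Equiv.Perm (Fin n), IsPDCProd μ ∧ IsPDCProd ν ∧
      μ * L.prod * ν = (finRotate n)⁻¹ ∧
      refLen μ + refLen L.prod + refLen ν = n - 1 := by
  rcases Nat.eq_zero_or_pos n with hn | hn
  · -- degenerate case n = 0
    subst hn
    refine ⟨1, 1, IsPDCProd_one, IsPDCProd_one, Equiv.ext (fun x => x.elim0), ?_⟩
    have hsupp : ∀ σ : Equiv.Perm (Fin 0), refLen σ = 0 := by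
      intro σ
      have h1 : σ.support.card ≤ 0 := by
        have := Finset.card_le_card (Finset.subset_univ σ.support)
        simpa using this
      rw [refLen]
      omega
    simp [hsupp]
  · -- main case
    set Ts := L.map Equiv.Perm.support with hTs
    have hcard : ∀ T ∈ Ts, T ⊆ (Finset.univ : Finset (Fin n)) ∧ 2 ≤ T.card := by
      intro T hT
      rw [hTs, List.mem_map] at hT
      obtain ⟨c, hc, rfl⟩ := hT
      exact ⟨Finset.subset_univ _, (hL c hc).1.two_le_card_support⟩
    have hpwT : Ts.Pairwise NIF := by
      rw [hTs, List.pairwise_map]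
      apply List.Pairwise.imp_of_mem ?_ hpar
      intro c d hc hd hNI
      rw [NIF]
      rw [Equiv.Perm.coe_support_eq_set_support, Equiv.Perm.coe_support_eq_set_support]
      exact hNI
    have hLT : (Ts.map dc).prod = L.prod := by
      rw [hTs, List.map_map]
      congr 1
      calc L.map (dc ∘ Equiv.Perm.support) = L.map id := by
            apply List.map_congr_left
            intro c hc
            exact ((hL c hc).eq_dc).symm
        _ = L := List.map_id L
    have huniv : (Finset.univ : Finset (Fin n)).Nonempty :=
      ⟨⟨0, hn⟩, Finset.mem_univ _⟩
    obtain ⟨Ms, hM1, hM2, hM3, hM4⟩ :=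
      core Ts.length (Finset.univ : Finset (Fin n)) Ts le_rfl huniv hcard hpwT
    refine ⟨(Ms.map dc).prod, 1, IsPDCProd_of_list Ms (fun M hM => (hM1 M hM).2) hM2,
      IsPDCProd_one, ?_, ?_⟩
    · rw [mul_one, ← hLT, hM3, dc_univ hn]
    · have hpwdM : Ms.Pairwise (fun M N => _root_.Disjoint M N) :=
        List.Pairwise.imp_of_mem
          (fun {a b} ha hb hNI => NIF_disjoint hNI (hM1 a ha).2 (hM1 b hb).2) hM2
      have hpwdT : Ts.Pairwise (fun M N => _root_.Disjoint M N) :=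
        List.Pairwise.imp_of_mem
          (fun {a b} ha hb hNI => NIF_disjoint hNI (hcard a ha).2 (hcard b hb).2) hpwT
      rw [refLen_one, ← hLT]
      rw [refLen_prod Ms (fun M hM => (hM1 M hM).2) hpwdM,
        refLen_prod Ts (fun T hT => (hcard T hT).2) hpwdT]
      have huc : (Finset.univ : Finset (Fin n)).card = n := by
        rw [Finset.card_univ, Fintype.card_fin]
      rw [huc] at hM4
      omega

end Aux

/-- a product of pairwise parallel descending cycles lies below the
`n`-cycle `δ̄ = (n, n-1, …, 1)` in the absolute order: there are products of
parallel descending cycles `μ, ν` with `μ · (π_1⋯π_k) · ν = δ̄` and reflection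
lengths adding up to `n - 1`. -/
theorem parallel_descending_le_deltaBar (n : ℕ) (L : List (Equiv.Perm (Fin n)))
    (hL : ∀ c ∈ L, IsDescendingCycle c)
    (hpar : L.Pairwise (fun c d => NonInterlacingS {x | c x ≠ x} {x | d x ≠ x})) :
    ∃ μ ν : Equiv.Perm (Fin n), IsPDCProd μ ∧ IsPDCProd ν ∧
      μ * L.prod * ν = (finRotate n)⁻¹ ∧
      refLen μ + refLen L.prod + refLen ν = n - 1 := parallel_descending_le_deltaBar' L hL hpar
end

section
/- Let M_n be the Birman–Ko–Lee monoid. For any two elements X, Y of M_n there exist elements U, V of M_n such that UX = VY (right common multiple property / right reversibility). -/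
/-- Index set for the band generators `a_{ts}`, `n ≥ t > s ≥ 1`. -/
def BandIdx (n : ℕ) : Type := {p : ℕ × ℕ // 1 ≤ p.2 ∧ p.2 < p.1 ∧ p.1 ≤ n}

/-- The letter `a_{ts}` in the free monoid (the empty word if out of range). -/
def bandLetter (n t s : ℕ) : FreeMonoid (BandIdx n) :=
  if h : 1 ≤ s ∧ s < t ∧ t ≤ n then FreeMonoid.of ⟨(t, s), h⟩ else 1

/-- The defining relations of the Birman–Ko–Lee band-generator presentation:
`a_{ts} a_{rq} = a_{rq} a_{ts}` when `(t-r)(t-q)(s-r)(s-q) > 0`, and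
`a_{ts} a_{sr} = a_{tr} a_{ts} = a_{sr} a_{tr}` for `n ≥ t > s > r ≥ 1`. -/
def bklRel (n : ℕ) : FreeMonoid (BandIdx n) → FreeMonoid (BandIdx n) → Prop :=
  fun x y =>
    (∃ t s r q : ℕ, 1 ≤ s ∧ s < t ∧ t ≤ n ∧ 1 ≤ q ∧ q < r ∧ r ≤ n ∧
      ((t : ℤ) - r) * ((t : ℤ) - q) * ((s : ℤ) - r) * ((s : ℤ) - q) > 0 ∧
      x = bandLetter n t s * bandLetter n r q ∧
      y = bandLetter n r q * bandLetter n t s) ∨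
    (∃ t s r : ℕ, 1 ≤ r ∧ r < s ∧ s < t ∧ t ≤ n ∧
      ((x = bandLetter n t s * bandLetter n s r ∧
        y = bandLetter n t r * bandLetter n t s) ∨
       (x = bandLetter n t r * bandLetter n t s ∧
        y = bandLetter n s r * bandLetter n t r)))

/-- The congruence generated by the band-generator relations. -/
def bklCon (n : ℕ) : Con (FreeMonoid (BandIdx n)) := conGen (bklRel n)

/-- The Birman–Ko–Lee monoid `B_n⁺` of positive braids. -/
abbrev BKL (n : ℕ) := (bklCon n).Quotient

/-- The band generator `a_{ts}` as an element of the monoid `BKL n`. -/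
def bandGen (n t s : ℕ) : BKL n := (bklCon n).mk' (bandLetter n t s)

/-- The fundamental element `δ = a_{n(n-1)} a_{(n-1)(n-2)} ⋯ a_{21}` of `BKL n`. -/
def deltaBKL (n : ℕ) : BKL n :=
  (bklCon n).mk' (((List.range (n - 1)).map (fun k => bandLetter n (n - k) (n - k - 1))).prod)

namespace BKLAux

variable {n : ℕ}

lemma of_rel {x y : FreeMonoid (BandIdx n)} (h : bklRel n x y) :
    (bklCon n).mk' x = (bklCon n).mk' y :=
  ((bklCon n).eq).mpr (ConGen.Rel.of x y h)

lemma gen_mul (t s r q : ℕ) :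
    bandGen n t s * bandGen n r q
      = (bklCon n).mk' (bandLetter n t s * bandLetter n r q) := (map_mul _ _ _).symm

/-- commutation of `a_{ts}` and `a_{rq}` when `s < t < q < r`. -/
lemma comm_below {t s r q : ℕ} (h1 : 1 ≤ s) (h2 : s < t) (h3 : t < q) (h4 : q < r)
    (h5 : r ≤ n) : bandGen n t s * bandGen n r q = bandGen n r q * bandGen n t s := by
  rw [gen_mul, gen_mul]
  apply of_rel
  refine Or.inl ⟨t, s, r, q, h1, h2, by omega, by omega, h4, h5, ?_, rfl, rfl⟩
  have e : ((t:ℤ) - r) * ((t:ℤ) - q) * ((s:ℤ) - r) * ((s:ℤ) - q)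
      = (((t:ℤ) - r) * ((t:ℤ) - q)) * (((s:ℤ) - r) * ((s:ℤ) - q)) := by ring
  rw [e]
  have a1 : (t:ℤ) - r < 0 := by omega
  have a2 : (t:ℤ) - q < 0 := by omega
  have a3 : (s:ℤ) - r < 0 := by omega
  have a4 : (s:ℤ) - q < 0 := by omega
  exact mul_pos (mul_pos_of_neg_of_neg a1 a2) (mul_pos_of_neg_of_neg a3 a4)

lemma trio1 {t s r : ℕ} (h1 : 1 ≤ r) (h2 : r < s) (h3 : s < t) (h4 : t ≤ n) :
    bandGen n t s * bandGen n s r = bandGen n t r * bandGen n t s := by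
  rw [gen_mul, gen_mul]
  exact of_rel (Or.inr ⟨t, s, r, h1, h2, h3, h4, Or.inl ⟨rfl, rfl⟩⟩)

lemma trio2 {t s r : ℕ} (h1 : 1 ≤ r) (h2 : r < s) (h3 : s < t) (h4 : t ≤ n) :
    bandGen n t r * bandGen n t s = bandGen n s r * bandGen n t r := by
  rw [gen_mul, gen_mul]
  exact of_rel (Or.inr ⟨t, s, r, h1, h2, h3, h4, Or.inr ⟨rfl, rfl⟩⟩)

lemma trio3 {t s r : ℕ} (h1 : 1 ≤ r) (h2 : r < s) (h3 : s < t) (h4 : t ≤ n) :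
    bandGen n t s * bandGen n s r = bandGen n s r * bandGen n t r :=
  (trio1 h1 h2 h3 h4).trans (trio2 h1 h2 h3 h4)

/-- The word `a_{u,u-1} a_{u-1,u-2} ⋯ a_{r+1,r}`. -/
def chainW (n u r : ℕ) : FreeMonoid (BandIdx n) :=
  ((List.range (u - r)).map (fun k => bandLetter n (u - k) (u - k - 1))).prod

lemma chainW_le {u r : ℕ} (h : u ≤ r) : chainW n u r = 1 := by
  unfold chainW
  rw [Nat.sub_eq_zero_of_le h]
  simp

lemma chainW_bot {u r : ℕ} (h : r < u) :
    chainW n u r = chainW n u (r + 1) * bandLetter n (r + 1) r := by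
  unfold chainW
  have e : u - r = (u - (r + 1)) + 1 := by omega
  rw [e, List.range_succ, List.map_append, List.prod_append]
  congr 1
  simp only [List.map_cons, List.map_nil, List.prod_cons, List.prod_nil, mul_one]
  congr 1 <;> omega

lemma chainW_top {u r : ℕ} (h : r < u) :
    chainW n u r = bandLetter n u (u - 1) * chainW n (u - 1) r := by
  unfold chainW
  have e : u - r = (u - 1 - r) + 1 := by omega
  rw [e, List.range_succ_eq_map, List.map_cons, List.prod_cons, List.map_map]
  have h1 : bandLetter n (u - 0) (u - 0 - 1) = bandLetter n u (u - 1) := by norm_num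
  have h2 : List.map ((fun k => bandLetter n (u - k) (u - k - 1)) ∘ Nat.succ)
      (List.range (u - 1 - r)) =
      List.map (fun k => bandLetter n (u - 1 - k) (u - 1 - k - 1)) (List.range (u - 1 - r)) := by
    apply List.map_congr_left
    intro a _
    simp only [Function.comp_apply, Nat.succ_eq_add_one]
    congr 1 <;> omega
  rw [h1, h2]

/-- The element `a_{u,u-1} a_{u-1,u-2} ⋯ a_{r+1,r}` of `BKL n`. -/
def chain (n u r : ℕ) : BKL n := (bklCon n).mk' (chainW n u r)

lemma delta_eq : deltaBKL n = chain n n 1 := rfl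

lemma chain_le {u r : ℕ} (h : u ≤ r) : chain n u r = 1 := by
  rw [chain, chainW_le h, map_one]

lemma chain_bot {u r : ℕ} (h : r < u) :
    chain n u r = chain n u (r + 1) * bandGen n (r + 1) r := by
  rw [chain, chainW_bot h, map_mul]; rfl

lemma chain_top {u r : ℕ} (h : r < u) :
    chain n u r = bandGen n u (u - 1) * chain n (u - 1) r := by
  rw [chain, chainW_top h, map_mul]; rfl

lemma chain_top' {u r : ℕ} (h : r < u + 1) :
    chain n (u + 1) r = bandGen n (u + 1) u * chain n u r := by
  have := chain_top (n := n) (u := u + 1) (r := r) h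
  simpa using this

lemma chain_split {u m r : ℕ} (h1 : r ≤ m) (h2 : m ≤ u) :
    chain n u m * chain n m r = chain n u r := by
  revert h2
  induction m, h1 using Nat.le_induction with
  | base => intro _; rw [chain_le (le_refl r), mul_one]
  | succ m hm ih =>
    intro h2
    rw [chain_top' (by omega), ← mul_assoc, ← chain_bot (by omega), ih (by omega)]

lemma comm_chain {u r : ℕ} (x : BKL n)
    (h : ∀ v, r ≤ v → v < u → bandGen n (v + 1) v * x = x * bandGen n (v + 1) v) :
    chain n u r * x = x * chain n u r := by
  induction u with
  | zero => rw [chain_le (Nat.zero_le r), one_mul, mul_one]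
  | succ u ih =>
    rcases le_or_gt (u + 1) r with hle | hlt
    · rw [chain_le hle, one_mul, mul_one]
    · rw [chain_top' hlt, mul_assoc, ih (fun v hv hv2 => h v hv (by omega)), ← mul_assoc,
        h u (by omega) (by omega), mul_assoc]

/-- `a_{ts} ⬝ chain(t,u) = chain(t,u) ⬝ a_{us}` for `s < u ≤ t`. -/
lemma lem1' : ∀ (d t u s : ℕ), t - u = d → 1 ≤ s → s < u → u ≤ t → t ≤ n →
    bandGen n t s * chain n t u = chain n t u * bandGen n u s := by
  intro d
  induction d with
  | zero =>
    intro t u s hd h1 h2 h3 h4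
    have : t = u := by omega
    subst this
    rw [chain_le (le_refl t), one_mul, mul_one]
  | succ d ih =>
    intro t u s hd h1 h2 h3 h4
    have htu : u < t := by omega
    have step : bandGen n t s * bandGen n t (t - 1) = bandGen n t (t - 1) * bandGen n (t - 1) s :=
      (trio1 h1 (by omega) (by omega) h4).symm
    rw [chain_top htu, ← mul_assoc, step, mul_assoc,
      ih (t - 1) u s (by omega) h1 h2 (by omega) (by omega), ← mul_assoc]

/-- `chain(u,r) ⬝ a_{tr} = a_{tu} ⬝ chain(u,r)` for `r ≤ u < t`. -/
lemma lem1 : ∀ (d u r t : ℕ), u - r = d → 1 ≤ r → r ≤ u → u < t → t ≤ n →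
    chain n u r * bandGen n t r = bandGen n t u * chain n u r := by
  intro d
  induction d with
  | zero =>
    intro u r t hd h1 h2 h3 h4
    have : u = r := by omega
    subst this
    rw [chain_le (le_refl u), one_mul, mul_one]
  | succ d ih =>
    intro u r t hd h1 h2 h3 h4
    have hru : r < u := by omega
    have step : bandGen n (r + 1) r * bandGen n t r = bandGen n t (r + 1) * bandGen n (r + 1) r :=
      (trio3 h1 (by omega) (by omega) h4).symm
    rw [chain_bot hru, mul_assoc, step, ← mul_assoc,
      ih u (r + 1) t (by omega) (by omega) (by omega) h3 h4, mul_assoc, ← chain_bot hru]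

/-- `chain(u,r) ⬝ a_{r+1,r} = a_{ur} ⬝ chain(u,r)`. -/
lemma lemM {u r : ℕ} (h1 : 1 ≤ r) (h2 : r < u) (h3 : u ≤ n) :
    chain n u r * bandGen n (r + 1) r = bandGen n u r * chain n u r := by
  have l := lem1' (u - (r + 1)) u (r + 1) r rfl h1 (by omega) (by omega) h3
  rw [chain_bot h2, ← mul_assoc (bandGen n u r), l, mul_assoc]

/-- `chain(u,r) = chain(u-1,r) ⬝ a_{ur}`. -/
lemma lemE : ∀ (d u r : ℕ), u - r = d → 1 ≤ r → r < u → u ≤ n →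
    chain n u r = chain n (u - 1) r * bandGen n u r := by
  intro d
  induction d with
  | zero => intro u r hd h1 h2 h3; omega
  | succ d ih =>
    intro u r hd h1 h2 h3
    rcases eq_or_lt_of_le (show r + 1 ≤ u by omega) with he | hlt
    · rw [chain_bot h2, chain_le (by omega), one_mul, chain_le (by omega : u - 1 ≤ r), one_mul,
        ← he]
    · have tr : bandGen n u (r + 1) * bandGen n (r + 1) r = bandGen n (r + 1) r * bandGen n u r :=
        trio3 h1 (by omega) hlt h3
      rw [chain_bot h2, ih u (r + 1) (by omega) (by omega) hlt h3, mul_assoc, tr, ← mul_assoc,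
        ← chain_bot (by omega : r < u - 1)]

/-- `chain(m,r) ⬝ a_{m,r+1} = a_{m-1,r} ⬝ chain(m,r)`. -/
lemma lemK {m r : ℕ} (h1 : 1 ≤ r) (h2 : r + 1 < m) (h3 : m ≤ n) :
    chain n m r * bandGen n m (r + 1) = bandGen n (m - 1) r * chain n m r := by
  have e := lemE (m - r) m r rfl h1 (by omega) h3
  have tr : bandGen n m r * bandGen n m (r + 1) = bandGen n (r + 1) r * bandGen n m r :=
    trio2 h1 (by omega) h2 h3
  have m1 : chain n (m - 1) r * bandGen n (r + 1) r = bandGen n (m - 1) r * chain n (m - 1) r :=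
    lemM h1 (by omega) (by omega)
  rw [e, mul_assoc, tr, ← mul_assoc, m1, mul_assoc]

/-- `chain(m,1) ⬝ a_{ms} = a_{m-1,s-1} ⬝ chain(m,1)` for `2 ≤ s < m`. -/
lemma lemU {m s : ℕ} (hs : 2 ≤ s) (hsm : s < m) (hmn : m ≤ n) :
    chain n m 1 * bandGen n m s = bandGen n (m - 1) (s - 1) * chain n m 1 := by
  have hsp : (s - 1) + 1 = s := by omega
  have sp := chain_split (n := n) (u := m) (m := s - 1) (r := 1) (by omega) (by omega)
  have cc : chain n (s - 1) 1 * bandGen n m s = bandGen n m s * chain n (s - 1) 1 := by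
    apply comm_chain
    intro v hv hv2
    exact comm_below hv (by omega) (by omega) hsm hmn
  have k := lemK (m := m) (r := s - 1) (by omega) (by omega) hmn
  rw [hsp] at k
  calc chain n m 1 * bandGen n m s
      = chain n m (s - 1) * (chain n (s - 1) 1 * bandGen n m s) := by rw [← sp, mul_assoc]
    _ = (chain n m (s - 1) * bandGen n m s) * chain n (s - 1) 1 := by rw [cc, mul_assoc]
    _ = (bandGen n (m - 1) (s - 1) * chain n m (s - 1)) * chain n (s - 1) 1 := by rw [k]
    _ = bandGen n (m - 1) (s - 1) * chain n m 1 := by rw [mul_assoc, sp]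

/-- conjugation by δ, generic case. -/
lemma lemT1 {t s m : ℕ} (hs : 2 ≤ s) (hst : s < t) (htm : t ≤ m) (hmn : m ≤ n) :
    chain n m 1 * bandGen n t s = bandGen n (t - 1) (s - 1) * chain n m 1 := by
  revert hmn
  induction m, htm using Nat.le_induction with
  | base => intro h; exact lemU hs hst h
  | succ m hm ih =>
    intro h
    have cb : bandGen n (t - 1) (s - 1) * bandGen n (m + 1) m
        = bandGen n (m + 1) m * bandGen n (t - 1) (s - 1) :=
      comm_below (by omega) (by omega) (by omega) (by omega) h
    rw [chain_top' (by omega), mul_assoc, ih (by omega), ← mul_assoc, ← cb, mul_assoc]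

/-- conjugation by δ, wrap-around case. -/
lemma lemT2 {t : ℕ} (ht : 2 ≤ t) (htn : t ≤ n) :
    chain n n 1 * bandGen n t 1 = bandGen n n (t - 1) * chain n n 1 := by
  have sp := chain_split (n := n) (u := n) (m := t - 1) (r := 1) (by omega) (by omega)
  have l1 := lem1 ((t - 1) - 1) (t - 1) 1 t rfl (le_refl 1) (by omega) (by omega) htn
  have m1 := lemM (n := n) (u := n) (r := t - 1) (by omega) (by omega) (le_refl n)
  have hsp : (t - 1) + 1 = t := by omega
  rw [hsp] at m1
  calc chain n n 1 * bandGen n t 1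
      = chain n n (t - 1) * (chain n (t - 1) 1 * bandGen n t 1) := by rw [← sp, mul_assoc]
    _ = (chain n n (t - 1) * bandGen n t (t - 1)) * chain n (t - 1) 1 := by
        rw [l1, ← mul_assoc]
    _ = bandGen n n (t - 1) * chain n n 1 := by rw [m1, mul_assoc, sp]

/-- one-step shift: for every generator `b` there is a generator `b'` with `b' δ = δ b`. -/
lemma shift1 {t s : ℕ} (h1 : 1 ≤ s) (h2 : s < t) (h3 : t ≤ n) :
    ∃ t' s', (1 ≤ s' ∧ s' < t' ∧ t' ≤ n) ∧
      bandGen n t' s' * chain n n 1 = chain n n 1 * bandGen n t s := by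
  rcases eq_or_lt_of_le h1 with he | hs2
  · refine ⟨n, t - 1, ⟨by omega, by omega, le_refl n⟩, ?_⟩
    rw [← he] at h2 ⊢
    exact (lemT2 (by omega) h3).symm
  · exact ⟨t - 1, s - 1, ⟨by omega, by omega, by omega⟩,
      (lemT1 (by omega) h2 h3 (le_refl n)).symm⟩

/-- iterated shift through powers of δ. -/
lemma shiftk (k : ℕ) {t s : ℕ} (h1 : 1 ≤ s) (h2 : s < t) (h3 : t ≤ n) :
    ∃ t' s', (1 ≤ s' ∧ s' < t' ∧ t' ≤ n) ∧
      bandGen n t' s' * (chain n n 1) ^ k = (chain n n 1) ^ k * bandGen n t s := by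
  induction k with
  | zero => exact ⟨t, s, ⟨h1, h2, h3⟩, by simp⟩
  | succ k ih =>
    obtain ⟨t1, s1, hv1, he1⟩ := ih
    obtain ⟨t2, s2, hv2, he2⟩ := shift1 hv1.1 hv1.2.1 hv1.2.2
    refine ⟨t2, s2, hv2, ?_⟩
    rw [pow_succ', ← mul_assoc, he2, mul_assoc, he1, ← mul_assoc]

/-- δ is right-divisible by every generator. -/
lemma delta_right_div {t s : ℕ} (h1 : 1 ≤ s) (h2 : s < t) (h3 : t ≤ n) :
    ∃ w : BKL n, w * bandGen n t s = chain n n 1 := by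
  rcases eq_or_lt_of_le h1 with he | hs2
  · -- s = 1
    refine ⟨chain n n t * chain n (t - 1) 1, ?_⟩
    have e := lemE (t - 1) t 1 rfl (le_refl 1) (by omega) h3
    rw [← he, mul_assoc, ← e, chain_split (by omega) h3]
  · -- 2 ≤ s
    refine ⟨chain n n t * chain n (t - 1) s * bandGen n t (s - 1) * chain n (s - 1) 1, ?_⟩
    have hsp : (s - 1) + 1 = s := by omega
    have e := lemE (t - s) t s rfl (by omega) h2 h3
    have tr : bandGen n t s * bandGen n s (s - 1) = bandGen n t (s - 1) * bandGen n t s :=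
      trio1 (by omega) (by omega) h2 h3
    have cc : bandGen n t s * chain n (s - 1) 1 = chain n (s - 1) 1 * bandGen n t s := by
      refine (comm_chain _ ?_).symm
      intro v hv hv2
      exact comm_below hv (by omega) (by omega) h2 h3
    have ctop : chain n s 1 = bandGen n s (s - 1) * chain n (s - 1) 1 :=
      chain_top (by omega)
    calc chain n n t * chain n (t - 1) s * bandGen n t (s - 1) * chain n (s - 1) 1
          * bandGen n t s
        = chain n n t * chain n (t - 1) s * bandGen n t (s - 1)
            * (bandGen n t s * chain n (s - 1) 1) := by rw [mul_assoc, cc]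
      _ = chain n n t * chain n (t - 1) s * (bandGen n t (s - 1) * bandGen n t s)
            * chain n (s - 1) 1 := by rw [← mul_assoc, ← mul_assoc]
      _ = chain n n t * chain n (t - 1) s * (bandGen n t s * bandGen n s (s - 1))
            * chain n (s - 1) 1 := by rw [tr]
      _ = chain n n t * ((chain n (t - 1) s * bandGen n t s)
            * (bandGen n s (s - 1) * chain n (s - 1) 1)) := by
          rw [mul_assoc, mul_assoc, mul_assoc, mul_assoc]
      _ = chain n n t * (chain n t s * chain n s 1) := by rw [← e, ← ctop]
      _ = chain n n 1 := by
          rw [chain_split (by omega) (by omega), chain_split (by omega) h3]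

/-- every word is a right divisor of a power of δ. -/
lemma word_div_delta_pow (l : List (BandIdx n)) :
    ∃ v : BKL n, v * (bklCon n).mk' (FreeMonoid.ofList l) = (chain n n 1) ^ l.length := by
  induction l using List.reverseRecOn with
  | nil => exact ⟨1, by simp⟩
  | append_singleton l b ih =>
    obtain ⟨v, hv⟩ := ih
    obtain ⟨⟨t, s⟩, hb⟩ := b
    obtain ⟨hb1, hb2, hb3⟩ := hb
    have hgen : (bklCon n).mk' (FreeMonoid.of (⟨(t, s), ⟨hb1, hb2, hb3⟩⟩ : BandIdx n))
        = bandGen n t s := by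
      rw [bandGen, bandLetter, dif_pos ⟨hb1, hb2, hb3⟩]
    have hsplit : (bklCon n).mk' (FreeMonoid.ofList (l ++ [⟨(t, s), ⟨hb1, hb2, hb3⟩⟩]))
        = (bklCon n).mk' (FreeMonoid.ofList l) * bandGen n t s := by
      rw [← hgen, ← map_mul]
      congr 1
    obtain ⟨t', s', hv', he'⟩ := shiftk (l.length) (show 1 ≤ s from hb1)
      (show s < t from hb2) (show t ≤ n from hb3)
    obtain ⟨w, hw⟩ := delta_right_div hv'.1 hv'.2.1 hv'.2.2
    refine ⟨w * v, ?_⟩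
    rw [List.length_append]
    show w * v * (bklCon n).mk' (FreeMonoid.ofList (l ++ _)) = chain n n 1 ^ (l.length + 1)
    rw [pow_succ', hsplit]
    calc w * v * ((bklCon n).mk' (FreeMonoid.ofList l) * bandGen n t s)
        = w * (v * (bklCon n).mk' (FreeMonoid.ofList l)) * bandGen n t s := by
          rw [mul_assoc, mul_assoc, mul_assoc]
      _ = w * (chain n n 1) ^ l.length * bandGen n t s := by rw [hv]
      _ = w * bandGen n t' s' * (chain n n 1) ^ l.length := by
          rw [mul_assoc, ← he', ← mul_assoc]
      _ = chain n n 1 * (chain n n 1) ^ l.length := by rw [hw]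

lemma elem_div_delta_pow (x : BKL n) :
    ∃ (v : BKL n) (k : ℕ), v * x = (chain n n 1) ^ k := by
  obtain ⟨g, rfl⟩ := Con.mk'_surjective x
  obtain ⟨v, hv⟩ := word_div_delta_pow (FreeMonoid.toList g)
  exact ⟨v, (FreeMonoid.toList g).length, by simpa using hv⟩

end BKLAux

/-- right reversibility / right common multiples in the Birman–Ko–Lee
monoid: for any `X, Y` there are `U, V` with `U X = V Y`. -/
theorem bkl_right_reversible (n : ℕ) (x y : BKL n) :
    ∃ u v : BKL n, u * x = v * y := by
  obtain ⟨vx, kx, hx⟩ := BKLAux.elem_div_delta_pow x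
  obtain ⟨vy, ky, hy⟩ := BKLAux.elem_div_delta_pow y
  refine ⟨(BKLAux.chain n n 1) ^ ky * vx, (BKLAux.chain n n 1) ^ kx * vy, ?_⟩
  rw [mul_assoc, hx, mul_assoc, hy, ← pow_add, ← pow_add, Nat.add_comm]
end

section
/- In the Birman–Ko–Lee monoid M_n, the element δ = a_{n(n-1)} a_{(n-1)(n-2)} ⋯ a_{21} satisfies a_{ts} δ = δ a_{(t+1)(s+1)} for all n−1 ≥ t > s ≥ 1 (indices shifted within range), and a_{n s} δ = δ a_{(s+1)1} for n > s ≥ 1. -/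
namespace BKLShiftAux

variable {n : ℕ}

lemma rel_of {x y : FreeMonoid (BandIdx n)} (h : bklRel n x y) :
    (bklCon n).mk' x = (bklCon n).mk' y :=
  (Con.eq _).mpr (ConGen.Rel.of x y h)

lemma gen_mul (t s r q : ℕ) :
    bandGen n t s * bandGen n r q
      = (bklCon n).mk' (bandLetter n t s * bandLetter n r q) := by
  simp [bandGen, map_mul]

/-- `a_{ts} a_{sr} = a_{tr} a_{ts}`. -/
lemma rel1 (t s r : ℕ) (h1 : 1 ≤ r) (h2 : r < s) (h3 : s < t) (h4 : t ≤ n) :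
    bandGen n t s * bandGen n s r = bandGen n t r * bandGen n t s := by
  rw [gen_mul, gen_mul]
  exact rel_of (Or.inr ⟨t, s, r, h1, h2, h3, h4, Or.inl ⟨rfl, rfl⟩⟩)

/-- `a_{tr} a_{ts} = a_{sr} a_{tr}`. -/
lemma rel2 (t s r : ℕ) (h1 : 1 ≤ r) (h2 : r < s) (h3 : s < t) (h4 : t ≤ n) :
    bandGen n t r * bandGen n t s = bandGen n s r * bandGen n t r := by
  rw [gen_mul, gen_mul]
  exact rel_of (Or.inr ⟨t, s, r, h1, h2, h3, h4, Or.inr ⟨rfl, rfl⟩⟩)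

/-- `a_{ts} a_{sr} = a_{sr} a_{tr}`. -/
lemma rel13 (t s r : ℕ) (h1 : 1 ≤ r) (h2 : r < s) (h3 : s < t) (h4 : t ≤ n) :
    bandGen n t s * bandGen n s r = bandGen n s r * bandGen n t r :=
  (rel1 t s r h1 h2 h3 h4).trans (rel2 t s r h1 h2 h3 h4)

lemma comm' (t s r q : ℕ) (hs : 1 ≤ s) (hst : s < t) (htn : t ≤ n)
    (hq : 1 ≤ q) (hqr : q < r) (hrn : r ≤ n)
    (hpos : ((t : ℤ) - r) * ((t : ℤ) - q) * ((s : ℤ) - r) * ((s : ℤ) - q) > 0) :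
    bandGen n t s * bandGen n r q = bandGen n r q * bandGen n t s := by
  rw [gen_mul, gen_mul]
  exact rel_of (Or.inl ⟨t, s, r, q, hs, hst, htn, hq, hqr, hrn, hpos, rfl, rfl⟩)

/-- Commutation when the band `[s,t]` lies strictly below `[q,r]`. -/
lemma comm_lt (t s r q : ℕ) (hs : 1 ≤ s) (hst : s < t) (htq : t < q) (hqr : q < r)
    (hrn : r ≤ n) :
    bandGen n t s * bandGen n r q = bandGen n r q * bandGen n t s := by
  have h1 : (t : ℤ) - r < 0 := by omega
  have h2 : (t : ℤ) - q < 0 := by omega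
  have h3 : (s : ℤ) - r < 0 := by omega
  have h4 : (s : ℤ) - q < 0 := by omega
  refine comm' t s r q hs hst (by omega) (by omega) hqr hrn ?_
  have h12 : ((t : ℤ) - r) * ((t : ℤ) - q) > 0 := mul_pos_of_neg_of_neg h1 h2
  have h123 : ((t : ℤ) - r) * ((t : ℤ) - q) * ((s : ℤ) - r) < 0 :=
    mul_neg_of_pos_of_neg h12 h3
  exact mul_pos_of_neg_of_neg h123 h4

/-- The descending product `a_{k,k-1} a_{k-1,k-2} ⋯ a_{s+1,s}` (equal to `1` if `k ≤ s`). -/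
def Wp (n : ℕ) : ℕ → ℕ → BKL n
  | 0, _ => 1
  | k+1, s => if s ≤ k then bandGen n (k+1) k * Wp n k s else 1

lemma Wp_zero (s : ℕ) : Wp n 0 s = 1 := rfl

lemma Wp_succ {k s : ℕ} (h : s ≤ k) :
    Wp n (k+1) s = bandGen n (k+1) k * Wp n k s := by
  simp [Wp, h]

lemma Wp_le {k s : ℕ} (h : k ≤ s) : Wp n k s = 1 := by
  cases k with
  | zero => rfl
  | succ k => simp [Wp, Nat.not_le.mpr (Nat.lt_of_succ_le h)]

lemma Wp_bot {k s : ℕ} (h : s < k) :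
    Wp n k s = Wp n k (s+1) * bandGen n (s+1) s := by
  induction k with
  | zero => omega
  | succ k ih =>
    rcases Nat.lt_or_ge s k with h' | h'
    · rw [Wp_succ (by omega), Wp_succ (by omega), ih h', mul_assoc]
    · have hsk : s = k := by omega
      subst hsk
      rw [Wp_succ le_rfl, Wp_le le_rfl, Wp_le le_rfl, mul_one, one_mul]

lemma Wp_split {k m s : ℕ} (h1 : s ≤ m) (h2 : m ≤ k) :
    Wp n k s = Wp n k m * Wp n m s := by
  induction k with
  | zero =>
    have : m = 0 := by omega
    subst this
    rw [Wp_le le_rfl, one_mul]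
  | succ k ih =>
    rcases Nat.lt_or_ge k m with h' | h'
    · have : m = k + 1 := by omega
      subst this
      rw [Wp_le le_rfl, one_mul]
    · rw [Wp_succ (by omega), Wp_succ h', ih h', mul_assoc]

/-- Lemma C : `a_{k,r} · (a_{r,r-1}⋯a_{21}) = (a_{r,r-1}⋯a_{21}) · a_{k,1}`. -/
lemma lemC : ∀ r k : ℕ, 1 ≤ r → r < k → k ≤ n →
    bandGen n k r * Wp n r 1 = Wp n r 1 * bandGen n k 1 := by
  intro r
  induction r with
  | zero => intro k h; omega
  | succ r ih =>
    intro k _ hrk hkn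
    rcases Nat.eq_zero_or_pos r with hr0 | hr0
    · subst hr0
      rw [Wp_le le_rfl, mul_one, one_mul]
    · rw [Wp_succ hr0, ← mul_assoc,
        rel13 k (r+1) r hr0 (by omega) (by omega) hkn, mul_assoc,
        ih k hr0 (by omega) hkn, mul_assoc]

/-- Lemma E : `a_{k,s} · (a_{k,k-1}⋯a_{s+1,s}) = (a_{k,k-1}⋯a_{s+1,s}) · a_{s+1,s}`. -/
lemma lemE (s : ℕ) (hs : 1 ≤ s) : ∀ k : ℕ, s + 1 ≤ k → k ≤ n →
    bandGen n k s * Wp n k s = Wp n k s * bandGen n (s+1) s := by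
  refine Nat.le_induction ?_ ?_
  · intro hn
    rw [Wp_succ le_rfl, Wp_le le_rfl, mul_one]
  · intro k hk ih hkn
    rw [Wp_succ (by omega), ← mul_assoc,
      (rel1 (k+1) k s hs (by omega) (by omega) hkn).symm, mul_assoc,
      ih (by omega), ← mul_assoc]

/-- Lemma J : `a_{m,s} · a_{k,m} · (a_{m,m-1}⋯a_{s+1,s})
      = a_{k,m} · (a_{m,m-1}⋯a_{s+1,s}) · a_{k,s+1}`. -/
lemma lemJ (s k : ℕ) (hs : 1 ≤ s) (hkn : k ≤ n) : ∀ m : ℕ, s + 1 ≤ m → m < k →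
    bandGen n m s * (bandGen n k m * Wp n m s)
      = bandGen n k m * Wp n m s * bandGen n k (s+1) := by
  refine Nat.le_induction ?_ ?_
  · -- base `m = s+1` : the braid relation `aba = bab`
    intro hmk
    rw [Wp_succ le_rfl, Wp_le le_rfl, mul_one]
    -- goal : a * (b * a) = b * a * b  with a = g(s+1,s), b = g(k,s+1)
    calc bandGen n (s+1) s * (bandGen n k (s+1) * bandGen n (s+1) s)
        = bandGen n (s+1) s * (bandGen n k s * bandGen n k (s+1)) := by
          rw [rel1 k (s+1) s hs (by omega) hmk hkn]
      _ = bandGen n (s+1) s * bandGen n k s * bandGen n k (s+1) := by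
          rw [mul_assoc]
      _ = bandGen n k (s+1) * bandGen n (s+1) s * bandGen n k (s+1) := by
          rw [← rel13 k (s+1) s hs (by omega) hmk hkn]
  · intro m hm ih hmk
    have hmn : m + 1 ≤ n := by omega
    rw [Wp_succ (by omega)]
    calc bandGen n (m+1) s * (bandGen n k (m+1) * (bandGen n (m+1) m * Wp n m s))
        = bandGen n (m+1) s * (bandGen n (m+1) m * (bandGen n k m * Wp n m s)) := by
          rw [← mul_assoc (bandGen n k (m+1)),
            rel13 k (m+1) m (by omega) (by omega) hmk hkn, mul_assoc]
      _ = bandGen n (m+1) m * bandGen n m s * (bandGen n k m * Wp n m s) := by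
          rw [← mul_assoc, ← mul_assoc,
            ← rel1 (m+1) m s hs (by omega) (by omega) hmn]
          simp only [mul_assoc]
      _ = bandGen n (m+1) m * (bandGen n m s * (bandGen n k m * Wp n m s)) := by
          rw [mul_assoc]
      _ = bandGen n (m+1) m * (bandGen n k m * Wp n m s * bandGen n k (s+1)) := by
          rw [ih (by omega)]
      _ = bandGen n (m+1) m * bandGen n k m * Wp n m s * bandGen n k (s+1) := by
          simp only [mul_assoc]
      _ = bandGen n k (m+1) * bandGen n (m+1) m * Wp n m s * bandGen n k (s+1) := by
          rw [← rel13 k (m+1) m (by omega) (by omega) hmk hkn]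
      _ = bandGen n k (m+1) * (bandGen n (m+1) m * Wp n m s) * bandGen n k (s+1) := by
          rw [mul_assoc (bandGen n k (m+1))]

/-- Lemma G : `a_{t,s} · (a_{k,k-1}⋯a_{s+1,s}) = (a_{k,k-1}⋯a_{s+1,s}) · a_{t+1,s+1}`
for `s < t < k ≤ n`. -/
lemma lemG (t s : ℕ) (hs : 1 ≤ s) (hst : s < t) : ∀ k : ℕ, t + 1 ≤ k → k ≤ n →
    bandGen n t s * Wp n k s = Wp n k s * bandGen n (t+1) (s+1) := by
  refine Nat.le_induction ?_ ?_
  · intro hkn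
    rw [Wp_succ (by omega)]
    exact lemJ s (t+1) hs hkn t (by omega) (by omega)
  · intro k hk ih hkn
    rw [Wp_succ (by omega), ← mul_assoc,
      comm_lt t s (k+1) k hs hst (by omega) (by omega) hkn, mul_assoc,
      ih (by omega), ← mul_assoc, mul_assoc]

/-- `a_{u,v}` commutes with `a_{s,s-1}⋯a_{21}` whenever `s < v`. -/
lemma commW (u v : ℕ) (_hv : 1 ≤ v) (hvu : v < u) (hun : u ≤ n) :
    ∀ s : ℕ, s < v → bandGen n u v * Wp n s 1 = Wp n s 1 * bandGen n u v := by
  intro s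
  induction s with
  | zero => intro _; rw [Wp_zero, mul_one, one_mul]
  | succ s ih =>
    intro hsv
    rcases Nat.eq_zero_or_pos s with hs0 | hs0
    · subst hs0; rw [Wp_le le_rfl, mul_one, one_mul]
    · rw [Wp_succ hs0, ← mul_assoc,
        ← comm_lt (s+1) s u v hs0 (by omega) hsv hvu hun, mul_assoc,
        ih (by omega), ← mul_assoc]

lemma delta_eq (hn : 1 ≤ n) : deltaBKL n = Wp n n 1 := by
  have key : ∀ m : ℕ, m ≤ n - 1 →
      (bklCon n).mk'
        (((List.range m).map (fun k => bandLetter n (n - k) (n - k - 1))).prod)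
        = Wp n n (n - m) := by
    intro m
    induction m with
    | zero =>
      intro _
      simp [Wp_le le_rfl]
    | succ m ih =>
      intro hm
      rw [List.range_succ, List.map_append, List.prod_append, map_mul,
        ih (by omega)]
      simp only [List.map_cons, List.map_nil, List.prod_cons, List.prod_nil, mul_one]
      have h1 : n - m - 1 < n := by omega
      have h2 : n - m - 1 + 1 = n - m := by omega
      have h3 : n - (m + 1) = n - m - 1 := by omega
      rw [h3, Wp_bot (k := n) (s := n - m - 1) h1, h2]
      rfl
  have := key (n - 1) le_rfl
  have h : n - (n - 1) = 1 := by omega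
  rw [h] at this
  exact this

end BKLShiftAux

open BKLShiftAux in
/-- in the Birman–Ko–Lee monoid, `a_{ts} δ = δ a_{(t+1)(s+1)}` for
`n-1 ≥ t > s ≥ 1`, and `a_{ns} δ = δ a_{(s+1)1}` for `n > s ≥ 1`. -/
theorem bkl_delta_shift (n : ℕ) :
    (∀ t s : ℕ, 1 ≤ s → s < t → t ≤ n - 1 →
      bandGen n t s * deltaBKL n = deltaBKL n * bandGen n (t + 1) (s + 1)) ∧
    (∀ s : ℕ, 1 ≤ s → s < n →
      bandGen n n s * deltaBKL n = deltaBKL n * bandGen n (s + 1) 1) := by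
  constructor
  · intro t s hs hst htn
    have hn : 3 ≤ n := by omega
    have hdel : deltaBKL n = Wp n n s * Wp n s 1 := by
      rw [delta_eq (by omega)]; exact Wp_split hs (by omega)
    calc bandGen n t s * deltaBKL n
        = bandGen n t s * Wp n n s * Wp n s 1 := by rw [hdel, mul_assoc]
      _ = Wp n n s * bandGen n (t+1) (s+1) * Wp n s 1 := by
          rw [lemG t s hs hst n (by omega) le_rfl]
      _ = Wp n n s * (bandGen n (t+1) (s+1) * Wp n s 1) := by rw [mul_assoc]
      _ = Wp n n s * (Wp n s 1 * bandGen n (t+1) (s+1)) := by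
          rw [commW (t+1) (s+1) (by omega) (by omega) (by omega) s (by omega)]
      _ = deltaBKL n * bandGen n (t+1) (s+1) := by rw [hdel, mul_assoc]
  · intro s hs hsn
    have hdel : deltaBKL n = Wp n n s * Wp n s 1 := by
      rw [delta_eq (by omega)]; exact Wp_split hs (by omega)
    calc bandGen n n s * deltaBKL n
        = bandGen n n s * Wp n n s * Wp n s 1 := by rw [hdel, mul_assoc]
      _ = Wp n n s * bandGen n (s+1) s * Wp n s 1 := by
          rw [lemE s hs n (by omega) le_rfl]
      _ = Wp n n s * (bandGen n (s+1) s * Wp n s 1) := by rw [mul_assoc]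
      _ = Wp n n s * (Wp n s 1 * bandGen n (s+1) 1) := by
          rw [lemC s (s+1) hs (by omega) (by omega)]
      _ = deltaBKL n * bandGen n (s+1) 1 := by rw [hdel, mul_assoc]
end

section
/- Let π = (t_1, t_2, …, t_m) be a descending cycle with t_1 > t_2 > ⋯ > t_m, and δ_π = a_{t_1 t_2} a_{t_2 t_3} ⋯ a_{t_{m-1} t_m} the corresponding positive braid in B_n. Then for every pair of indices t_j > t_i from {t_1,…,t_m}, the generator a_{t_j t_i} left-divides δ_π in the positive monoid: δ_π = a_{t_j t_i} P for some positive word P; likewise a_{t_j t_i} right-divides δ_π. -/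
/-- Relators for the Artin presentation of the braid group `B n`.
Generator `i : Fin (n-1)` stands for the Artin generator `σ_{i+1}`. -/
def braidRels (n : ℕ) : Set (FreeGroup (Fin (n - 1))) :=
  {r | (∃ i j : Fin (n - 1), (i : ℕ) + 1 < (j : ℕ) ∧
          r = FreeGroup.of i * FreeGroup.of j * (FreeGroup.of i)⁻¹ * (FreeGroup.of j)⁻¹) ∨
       (∃ i j : Fin (n - 1), (i : ℕ) + 1 = (j : ℕ) ∧
          r = FreeGroup.of i * FreeGroup.of j * FreeGroup.of i *
              (FreeGroup.of j * FreeGroup.of i * FreeGroup.of j)⁻¹)}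

/-- The braid group on `n` strands, via the Artin presentation. -/
abbrev Braid (n : ℕ) := PresentedGroup (braidRels n)

/-- The Artin generator `σ_i` of `B n`, defined for `1 ≤ i ≤ n-1`
(junk value `1` out of range). -/
def sigma (n i : ℕ) : Braid n :=
  if h : i - 1 < n - 1 ∧ 1 ≤ i then PresentedGroup.of ⟨i - 1, h.1⟩ else 1

/-- The band generator
`a_{ts} = (σ_{t-1} ⋯ σ_{s+1}) σ_s (σ_{s+1}⁻¹ ⋯ σ_{t-1}⁻¹)` for `n ≥ t > s ≥ 1`. -/
def band (n t s : ℕ) : Braid n :=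
  (((List.range (t - 1 - s)).map (fun k => sigma n (t - 1 - k))).prod) * sigma n s *
    (((List.range (t - 1 - s)).map (fun k => sigma n (t - 1 - k))).prod)⁻¹

/-- The fundamental element `δ = σ_{n-1} σ_{n-2} ⋯ σ_1`. -/
def delta (n : ℕ) : Braid n :=
  ((List.range (n - 1)).map (fun k => sigma n (n - 1 - k))).prod

/-- The submonoid of positive braids: products of band generators. -/
def posMonoid (n : ℕ) : Submonoid (Braid n) :=
  Submonoid.closure {x | ∃ t s : ℕ, 1 ≤ s ∧ s < t ∧ t ≤ n ∧ x = band n t s}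

/-- For a descending list `l = [t_1, …, t_m]`, `t_1 > ⋯ > t_m`, the positive braid
`δ_π = a_{t_1 t_2} a_{t_2 t_3} ⋯ a_{t_{m-1} t_m}`. -/
def descProd (n : ℕ) (l : List ℕ) : Braid n :=
  ((l.zip l.tail).map (fun x => band n x.1 x.2)).prod

/-! ### Relations between Artin generators -/

lemma braid_rel_one {n : ℕ} {r : FreeGroup (Fin (n-1))} (hr : r ∈ braidRels n) :
    PresentedGroup.mk (braidRels n) r = 1 :=
  (QuotientGroup.eq_one_iff _).mpr (Subgroup.subset_normalClosure hr)

lemma of_comm {n : ℕ} (a b : Fin (n-1)) (h : (a:ℕ) + 1 < (b:ℕ)) :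
    (PresentedGroup.of a : Braid n) * PresentedGroup.of b =
      PresentedGroup.of b * PresentedGroup.of a := by
  have h1 := braid_rel_one (n := n)
    (r := FreeGroup.of a * FreeGroup.of b * (FreeGroup.of a)⁻¹ * (FreeGroup.of b)⁻¹)
    (Or.inl ⟨a, b, h, rfl⟩)
  simp only [map_mul, map_inv] at h1
  have hofa : ∀ x : Fin (n-1),
      PresentedGroup.mk (braidRels n) (FreeGroup.of x) = PresentedGroup.of x := fun _ => rfl
  rw [hofa, hofa, mul_inv_eq_one, mul_inv_eq_iff_eq_mul] at h1
  exact h1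

lemma of_braid {n : ℕ} (a b : Fin (n-1)) (h : (a:ℕ) + 1 = (b:ℕ)) :
    (PresentedGroup.of a : Braid n) * PresentedGroup.of b * PresentedGroup.of a =
      PresentedGroup.of b * PresentedGroup.of a * PresentedGroup.of b := by
  have h1 := braid_rel_one (n := n)
    (r := FreeGroup.of a * FreeGroup.of b * FreeGroup.of a *
          (FreeGroup.of b * FreeGroup.of a * FreeGroup.of b)⁻¹)
    (Or.inr ⟨a, b, h, rfl⟩)
  simp only [map_mul, map_inv] at h1
  have hofa : ∀ x : Fin (n-1),
      PresentedGroup.mk (braidRels n) (FreeGroup.of x) = PresentedGroup.of x := fun _ => rfl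
  rw [hofa, hofa, mul_inv_eq_one] at h1
  exact h1

lemma sigma_comm (n : ℕ) {i j : ℕ} (hij : i + 2 ≤ j) : Commute (sigma n i) (sigma n j) := by
  unfold sigma
  split_ifs with h1 h2 h2
  · have hi : 1 ≤ i := h1.2
    exact of_comm ⟨i-1, h1.1⟩ ⟨j-1, h2.1⟩ (by simp only []; omega)
  · exact Commute.one_right _
  · exact Commute.one_left _
  · exact Commute.one_left _

lemma sigma_braid (n i : ℕ) (hi : 1 ≤ i) (hn : i + 1 ≤ n - 1) :
    sigma n i * sigma n (i+1) * sigma n i = sigma n (i+1) * sigma n i * sigma n (i+1) := by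
  have ha : i - 1 < n - 1 ∧ 1 ≤ i := by omega
  have hb : (i+1) - 1 < n - 1 ∧ 1 ≤ i + 1 := by omega
  unfold sigma
  rw [dif_pos ha, dif_pos hb]
  exact of_braid _ _ (by simp only []; omega)

/-! ### Band generators -/

def BW (n t s : ℕ) : List (Braid n) := (List.range (t - 1 - s)).map (fun k => sigma n (t - 1 - k))

lemma band_eq (n t s : ℕ) :
    band n t s = (BW n t s).prod * sigma n s * ((BW n t s).prod)⁻¹ := rfl

lemma mem_BW {n t s : ℕ} {x : Braid n} (hx : x ∈ BW n t s) :
    ∃ i, s + 1 ≤ i ∧ i ≤ t - 1 ∧ x = sigma n i := by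
  obtain ⟨k, hk, rfl⟩ := List.mem_map.mp hx
  rw [List.mem_range] at hk
  exact ⟨t - 1 - k, by omega, by omega, rfl⟩

lemma commute_sigma_band (n j t s : ℕ) (hs : 1 ≤ s) (hst : s < t)
    (h : j + 2 ≤ s ∨ t + 1 ≤ j) : Commute (sigma n j) (band n t s) := by
  have hW : Commute (sigma n j) (BW n t s).prod := by
    apply Commute.list_prod_right
    intro x hx
    obtain ⟨i, hi1, hi2, rfl⟩ := mem_BW hx
    rcases h with h | h
    · exact sigma_comm n (by omega)
    · exact (sigma_comm n (by omega)).symm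
  have hσ : Commute (sigma n j) (sigma n s) := by
    rcases h with h | h
    · exact sigma_comm n (by omega)
    · exact (sigma_comm n (by omega)).symm
  rw [band_eq]
  exact (hW.mul_right hσ).mul_right hW.inv_right

lemma commute_band_band (n t s r q : ℕ) (hq : 1 ≤ q) (hqr : q < r) (hrs : r < s)
    (hst : s < t) : Commute (band n t s) (band n r q) := by
  have key : ∀ i, q ≤ i → i ≤ r - 1 → Commute (band n t s) (sigma n i) := by
    intro i h1 h2
    exact (commute_sigma_band n i t s (by omega) hst (Or.inl (by omega))).symm
  have hW : Commute (band n t s) (BW n r q).prod := by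
    apply Commute.list_prod_right
    intro x hx
    obtain ⟨i, hi1, hi2, rfl⟩ := mem_BW hx
    exact key i (by omega) hi2
  rw [band_eq n r q]
  exact (hW.mul_right (key q le_rfl (by omega))).mul_right hW.inv_right

lemma band_base (n s : ℕ) : band n (s+1) s = sigma n s := by
  unfold band
  rw [show s + 1 - 1 - s = 0 by omega]
  simp

lemma band_peel_top (n t s : ℕ) (h : s + 2 ≤ t) :
    band n t s = sigma n (t-1) * band n (t-1) s * (sigma n (t-1))⁻¹ := by
  have hlist : BW n t s = sigma n (t-1) :: BW n (t-1) s := by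
    unfold BW
    rw [show t - 1 - s = (t - 1 - 1 - s) + 1 by omega, List.range_succ_eq_map,
        List.map_cons, List.map_map]
    congr 1
    apply List.map_congr_left
    intro k hk
    simp only [Function.comp_apply]
    congr 1
    omega
  rw [band_eq, band_eq, hlist, List.prod_cons, mul_inv_rev]
  group

lemma band_peel_bot (n t s : ℕ) (hs : 1 ≤ s) (h : s + 2 ≤ t) (ht : t ≤ n) :
    band n t s = (sigma n s)⁻¹ * band n t (s+1) * sigma n s := by
  have hlist : BW n t s = BW n t (s+1) ++ [sigma n (s+1)] := by
    unfold BW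
    rw [show t - 1 - s = (t - 1 - (s+1)) + 1 by omega, List.range_succ, List.map_append]
    congr 2
    simp only [List.map_cons, List.map_nil]
    congr 2
    omega
  set a := sigma n s with ha
  set b := sigma n (s+1) with hb
  set W := (BW n t (s+1)).prod with hW
  have hcomm : Commute a W := by
    apply Commute.list_prod_right
    intro x hx
    obtain ⟨i, hi1, hi2, rfl⟩ := mem_BW hx
    exact sigma_comm n (by omega)
  have key : a * b * a = b * a * b := sigma_braid n s hs (by omega)
  have hbab : b * a * b⁻¹ = a⁻¹ * b * a := by
    have h1 : a * (b * a) = b * a * b := by rw [← mul_assoc]; exact key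
    calc b * a * b⁻¹ = a⁻¹ * (a * (b * a)) * b⁻¹ := by group
      _ = a⁻¹ * (b * a * b) * b⁻¹ := by rw [h1]
      _ = a⁻¹ * b * a := by group
  have h2 : a⁻¹ * W = W * a⁻¹ := hcomm.inv_left.eq
  have h3 : a * W⁻¹ = W⁻¹ * a := hcomm.inv_right.eq
  rw [band_eq, band_eq, hlist, List.prod_append, List.prod_cons, List.prod_nil]
  calc (W * (b * 1)) * a * (W * (b * 1))⁻¹ = W * (b * a * b⁻¹) * W⁻¹ := by group
    _ = W * (a⁻¹ * b * a) * W⁻¹ := by rw [hbab]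
    _ = (W * a⁻¹) * (b * (a * W⁻¹)) := by group
    _ = (a⁻¹ * W) * (b * (W⁻¹ * a)) := by rw [← h2, h3]
    _ = a⁻¹ * (W * b * W⁻¹) * a := by group

/-! ### The band relations -/

lemma bandA (n : ℕ) : ∀ t s r : ℕ, 1 ≤ r → r < s → s < t → t ≤ n →
    band n t s * band n s r = band n t r * band n t s := by
  intro t
  induction t using Nat.strong_induction_on with
  | _ t IH =>
    intro s r hr hrs hst htn
    rcases eq_or_lt_of_le (Nat.succ_le_of_lt hst) with he | hlt
    · -- t = s + 1
      rw [← he, band_base]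
      rw [band_peel_top n (s+1) r (by omega)]
      simp only [Nat.add_sub_cancel]
      group
    · have h2 : s + 2 ≤ t := hlt
      have e1 := band_peel_top n t s h2
      have e2 := band_peel_top n t r (by omega)
      have hc : Commute (sigma n (t-1)) (band n s r) :=
        commute_sigma_band n (t-1) s r hr hrs (Or.inr (by omega))
      have ih := IH (t-1) (by omega) s r hr hrs (by omega) (by omega)
      set σ := sigma n (t-1)
      set X := band n (t-1) s
      set B := band n s r
      set Y := band n (t-1) r
      have hBσ : σ⁻¹ * B * σ = B := by rw [mul_assoc, ← hc.eq]; group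
      rw [e1, e2]
      calc σ * X * σ⁻¹ * B = σ * X * (σ⁻¹ * B * σ) * σ⁻¹ := by group
        _ = σ * X * B * σ⁻¹ := by rw [hBσ]
        _ = σ * (X * B) * σ⁻¹ := by group
        _ = σ * (Y * X) * σ⁻¹ := by rw [ih]
        _ = (σ * Y * σ⁻¹) * (σ * X * σ⁻¹) := by group

lemma bandB (n : ℕ) : ∀ k t s r : ℕ, s - 1 - r = k → 1 ≤ r → r < s → s < t → t ≤ n →
    band n t s * band n s r = band n s r * band n t r := by
  intro k
  induction k using Nat.strong_induction_on with
  | _ k IH =>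
    intro t s r hk hr hrs hst htn
    rcases eq_or_lt_of_le (Nat.succ_le_of_lt hrs) with he | hlt
    · -- s = r + 1
      rw [← he, band_base]
      have e := band_peel_bot n t r hr (by omega) htn
      rw [e]
      group
    · have e1 := band_peel_bot n s r hr hlt (by omega)
      have e2 := band_peel_bot n t r hr (by omega) htn
      have hc : Commute (sigma n r) (band n t s) :=
        commute_sigma_band n r t s (by omega) hst (Or.inl (by omega))
      have ih := IH (s - 1 - (r+1)) (by omega) t s (r+1) rfl (by omega) hlt hst htn
      set σ := sigma n r
      set A := band n s (r+1)
      set T := band n t (r+1)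
      set Z := band n t s
      have hZσ : σ * Z * σ⁻¹ = Z := by rw [hc.eq]; group
      rw [e1, e2]
      calc Z * (σ⁻¹ * A * σ) = σ⁻¹ * (σ * Z * σ⁻¹) * A * σ := by group
        _ = σ⁻¹ * Z * A * σ := by rw [hZσ]
        _ = σ⁻¹ * (Z * A) * σ := by group
        _ = σ⁻¹ * (A * T) * σ := by rw [ih]
        _ = (σ⁻¹ * A * σ) * (σ⁻¹ * T * σ) := by group

/-! ### Lists and positive products -/

lemma descProd_nil (n : ℕ) : descProd n [] = 1 := rfl

lemma descProd_single (n a : ℕ) : descProd n [a] = 1 := rfl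

lemma descProd_cons_cons (n a b : ℕ) (l : List ℕ) :
    descProd n (a :: b :: l) = band n a b * descProd n (b :: l) := by
  simp [descProd]

lemma band_mem_pos (n t s : ℕ) (h1 : 1 ≤ s) (h2 : s < t) (h3 : t ≤ n) :
    band n t s ∈ posMonoid n :=
  Submonoid.subset_closure ⟨t, s, h1, h2, h3, rfl⟩

lemma descProd_mem_pos (n : ℕ) : ∀ l : List ℕ, l.Pairwise (· > ·) →
    (∀ x ∈ l, 1 ≤ x ∧ x ≤ n) → descProd n l ∈ posMonoid n := by
  intro l
  induction l with
  | nil => intro _ _; rw [descProd_nil]; exact one_mem _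
  | cons a l ih =>
    intro hp hr
    cases l with
    | nil => rw [descProd_single]; exact one_mem _
    | cons b m =>
      rw [descProd_cons_cons]
      have hab : a > b := (List.pairwise_cons.mp hp).1 b (by simp)
      refine mul_mem (band_mem_pos n a b ?_ hab ?_) (ih hp.of_cons ?_)
      · exact (hr b (by simp)).1
      · exact (hr a (by simp)).2
      · intro x hx; exact hr x (List.mem_cons_of_mem a hx)

lemma descProd_append_pair (n : ℕ) : ∀ (M : List ℕ) (g w : ℕ),
    descProd n (M ++ [g, w]) = descProd n (M ++ [g]) * band n g w := by
  intro M
  induction M with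
  | nil =>
    intro g w
    simp [descProd_cons_cons, descProd_single]
  | cons a M ih =>
    intro g w
    cases M with
    | nil =>
      simp [descProd_cons_cons, descProd_single, mul_assoc]
    | cons b M' =>
      simp only [List.cons_append] at *
      rw [descProd_cons_cons, descProd_cons_cons n a b (M' ++ [g]), ih, mul_assoc]

/-! ### Left divisibility -/

lemma left_div (n : ℕ) : ∀ M : List ℕ, M.Pairwise (· > ·) →
    (∀ x ∈ M, 1 ≤ x ∧ x ≤ n) → ∀ u v : ℕ, u ∈ M → v ∈ M → v < u →
    ∃ P ∈ posMonoid n, descProd n M = band n u v * P := by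
  intro M
  induction M with
  | nil => intro _ _ u v hu _ _; simp at hu
  | cons w M' ih =>
    intro hp hr u v hu hv huv
    cases M' with
    | nil =>
      simp at hu hv; omega
    | cons h M'' =>
      have hp' : (h :: M'').Pairwise (· > ·) := hp.of_cons
      have hr' : ∀ x ∈ h :: M'', 1 ≤ x ∧ x ≤ n :=
        fun x hx => hr x (List.mem_cons_of_mem w hx)
      have hwgt : ∀ x ∈ h :: M'', w > x := (List.pairwise_cons.mp hp).1
      have hhgt : ∀ x ∈ M'', h > x := (List.pairwise_cons.mp hp').1
      rw [descProd_cons_cons]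
      rcases List.mem_cons.mp hu with rfl | hu'
      · -- u = w is the head
        rcases List.mem_cons.mp hv with rfl | hv'
        · omega
        rcases List.mem_cons.mp hv' with rfl | hv''
        · -- v = h
          refine ⟨descProd n (v :: M''), descProd_mem_pos n _ hp' hr', rfl⟩
        · -- v ∈ M''
          have hhv : v < h := hhgt v hv''
          obtain ⟨P', hP', hEq⟩ := ih hp' hr' h v (by simp) (List.mem_cons_of_mem h hv'') hhv
          have hA : band n u h * band n h v = band n u v * band n u h :=
            bandA n u h v (hr' v hv').1 hhv (hwgt h (by simp)) (hr u (by simp)).2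
          refine ⟨band n u h * P', mul_mem (band_mem_pos n u h (hr' h (by simp)).1
            (hwgt h (by simp)) (hr u (by simp)).2) hP', ?_⟩
          rw [hEq, ← mul_assoc, hA, mul_assoc]
      · -- u in the tail
        have huw : u < w := hwgt u hu'
        have hvw : v ≠ w := by omega
        have hv' : v ∈ h :: M'' := by
          rcases List.mem_cons.mp hv with h' | hv'
          · exact absurd h' hvw
          · exact hv'
        obtain ⟨P', hP', hEq⟩ := ih hp' hr' u v hu' hv' huv
        have hwn : w ≤ n := (hr w (by simp)).2
        have h1v : 1 ≤ v := (hr' v hv').1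
        rcases List.mem_cons.mp hu' with rfl | hu''
        · -- u = h : use relation B
          have hB : band n w u * band n u v = band n u v * band n w v :=
            bandB n (u - 1 - v) w u v rfl h1v huv (hwgt u (by simp)) hwn
          refine ⟨band n w v * P', mul_mem (band_mem_pos n w v h1v (by omega) hwn) hP', ?_⟩
          rw [hEq, ← mul_assoc, hB, mul_assoc]
        · -- u ∈ M'' : bands commute
          have huh : u < h := hhgt u hu''
          have hC : Commute (band n w h) (band n u v) :=
            commute_band_band n w h u v h1v huv huh (hwgt h (by simp))
          refine ⟨band n w h * P', mul_mem (band_mem_pos n w h (hr' h (by simp)).1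
            (hwgt h (by simp)) hwn) hP', ?_⟩
          rw [hEq, ← mul_assoc, hC.eq, mul_assoc]

/-! ### Right divisibility -/

lemma right_div (n : ℕ) : ∀ M : List ℕ, M.Pairwise (· > ·) →
    (∀ x ∈ M, 1 ≤ x ∧ x ≤ n) → ∀ u v : ℕ, u ∈ M → v ∈ M → v < u →
    ∃ Q ∈ posMonoid n, descProd n M = Q * band n u v := by
  intro M
  induction M using List.reverseRecOn with
  | nil => intro _ _ u v hu _ _; simp at hu
  | append_singleton M' w ih =>
    intro hp hr u v hu hv huv
    rcases List.eq_nil_or_concat' M' with rfl | ⟨M'', g, rfl⟩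
    · simp at hu hv; omega
    have hp' : (M'' ++ [g]).Pairwise (· > ·) :=
      hp.sublist (List.sublist_append_left _ _)
    have hr' : ∀ x ∈ M'' ++ [g], 1 ≤ x ∧ x ≤ n := fun x hx =>
      hr x (List.mem_append_left _ hx)
    have hgtw : ∀ x ∈ M'' ++ [g], x > w := fun x hx =>
      (List.pairwise_append.mp hp).2.2 x hx w (List.mem_singleton_self w)
    have hgtg : ∀ x ∈ M'', x > g := fun x hx =>
      (List.pairwise_append.mp hp').2.2 x hx g (List.mem_singleton_self g)
    have hg : g ∈ M'' ++ [g] := List.mem_append_right _ (List.mem_singleton_self g)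
    have hgw : g > w := hgtw g hg
    have hun : u ≤ n := (hr u hu).2
    have hEqM : descProd n ((M'' ++ [g]) ++ [w]) = descProd n (M'' ++ [g]) * band n g w := by
      rw [List.append_assoc]
      exact descProd_append_pair n M'' g w
    have h1w : 1 ≤ w := (hr w (List.mem_append_right _ (List.mem_singleton_self w))).1
    have hposgw : band n g w ∈ posMonoid n :=
      band_mem_pos n g w h1w hgw (hr' g hg).2
    rw [hEqM]
    rcases List.mem_append.mp hv with hv' | hv'
    · -- v ∈ M' = M'' ++ [g]
      have hu' : u ∈ M'' ++ [g] := by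
        rcases List.mem_append.mp hu with h' | h'
        · exact h'
        · exfalso; have := hgtw v hv'; simp at h'; omega
      obtain ⟨Q', hQ', hEq⟩ := ih hp' hr' u v hu' hv' huv
      rcases List.mem_append.mp hv' with hv'' | hv''
      · -- v ∈ M''
        have hvg : v > g := hgtg v hv''
        have hC : Commute (band n u v) (band n g w) :=
          commute_band_band n u v g w h1w hgw hvg huv
        refine ⟨Q' * band n g w, mul_mem hQ' hposgw, ?_⟩
        rw [hEq, mul_assoc, hC.eq, ← mul_assoc]
      · -- v = g
        simp only [List.mem_singleton] at hv''
        subst hv''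
        have hA : band n u v * band n v w = band n u w * band n u v :=
          bandA n u v w h1w hgw huv hun
        refine ⟨Q' * band n u w, mul_mem hQ' (band_mem_pos n u w h1w (by omega) hun), ?_⟩
        rw [hEq, mul_assoc, hA, ← mul_assoc]
    · -- v = w
      simp only [List.mem_singleton] at hv'
      subst hv'
      have hu' : u ∈ M'' ++ [g] := by
        rcases List.mem_append.mp hu with h' | h'
        · exact h'
        · simp at h'; omega
      rcases List.mem_append.mp hu' with hu'' | hu''
      · -- u ∈ M''
        have hug : u > g := hgtg u hu''
        obtain ⟨Q', hQ', hEq⟩ := ih hp' hr' u g hu' hg hug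
        have hB : band n u g * band n g v = band n g v * band n u v :=
          bandB n (g - 1 - v) u g v rfl h1w hgw hug hun
        refine ⟨Q' * band n g v, mul_mem hQ' hposgw, ?_⟩
        rw [hEq, mul_assoc, hB, ← mul_assoc]
      · -- u = g
        simp only [List.mem_singleton] at hu''
        subst hu''
        exact ⟨descProd n (M'' ++ [u]), descProd_mem_pos n _ hp' hr', rfl⟩


/-- every `a_{t_j t_i}` with `t_j > t_i` both occurring in the
descending cycle `π = (t_1, …, t_m)` left-divides and right-divides `δ_π`
in the positive monoid. -/
theorem band_divides_descProd (n : ℕ) (l : List ℕ)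
    (hlen : 2 ≤ l.length) (hdesc : l.Chain' (· > ·))
    (hrange : ∀ x ∈ l, 1 ≤ x ∧ x ≤ n)
    (u v : ℕ) (hu : u ∈ l) (hv : v ∈ l) (huv : v < u) :
    (∃ P ∈ posMonoid n, descProd n l = band n u v * P) ∧
    (∃ Q ∈ posMonoid n, descProd n l = Q * band n u v) := by
  have hp : l.Pairwise (· > ·) := List.isChain_iff_pairwise.mp hdesc
  exact ⟨left_div n l hp hrange u v hu hv huv, right_div n l hp hrange u v hu hv huv⟩
end
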